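/- arXiv:1012.5192 — 6 statements merged into one kernel-verified Lean document; each statement's English description precedes it below -/
import Mathlib

section
/- The double zeta value ζ(4,1) = ∑_{m>n≥1} 1/(m⁴ n) equals 2ζ(5) − ζ(2)ζ(3). -/
open Filter Finset Function
open scoped ENNReal NNReal Topology

namespace Zeta41Proof
lemma tsum_lower (g : ℕ × ℕ → ℝ≥0∞) (hg : ∀ p, g p ≠ 0) :
    ∑' p : ℕ × ℕ, (if p.2 < p.1 then g p else 0)
      = ∑' p : ℕ × ℕ, g (p.1 + p.2 + 1, p.1) := by
  refine tsum_eq_tsum_of_ne_zero_bij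
    (fun x => (x.1.1 + x.1.2 + 1, x.1.1)) ?_ ?_ ?_
  · intro x y h
    simp only [Prod.mk.injEq] at h
    obtain ⟨h1, h2⟩ := h
    exact Subtype.ext (Prod.ext (by omega) (by omega))
  · rintro ⟨m, j⟩ hf
    have hj : j < m := by
      by_contra h
      exact hf (by simp [h])
    refine ⟨⟨(j, m - j - 1), hg _⟩, ?_⟩
    simp only [Prod.mk.injEq]
    exact ⟨by omega, trivial⟩
  · rintro ⟨⟨n, k⟩, -⟩
    simp only
    rw [if_pos (by omega)]

lemma tsum_upper (g : ℕ × ℕ → ℝ≥0∞) (hg : ∀ p, g p ≠ 0) :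
    ∑' p : ℕ × ℕ, (if p.1 < p.2 then g p else 0)
      = ∑' p : ℕ × ℕ, g (p.1, p.1 + p.2 + 1) := by
  refine tsum_eq_tsum_of_ne_zero_bij
    (fun x => (x.1.1, x.1.1 + x.1.2 + 1)) ?_ ?_ ?_
  · intro x y h
    simp only [Prod.mk.injEq] at h
    obtain ⟨h1, h2⟩ := h
    exact Subtype.ext (Prod.ext (by omega) (by omega))
  · rintro ⟨m, j⟩ hf
    have hj : m < j := by
      by_contra h
      exact hf (by simp [h])
    refine ⟨⟨(m, j - m - 1), hg _⟩, ?_⟩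
    simp only [Prod.mk.injEq]
    exact ⟨trivial, by omega⟩
  · rintro ⟨⟨n, k⟩, -⟩
    simp only
    rw [if_pos (by omega)]

lemma tsum_diag (g : ℕ × ℕ → ℝ≥0∞) (hg : ∀ p, g p ≠ 0) :
    ∑' p : ℕ × ℕ, (if p.1 = p.2 then g p else 0) = ∑' n : ℕ, g (n, n) := by
  refine tsum_eq_tsum_of_ne_zero_bij (fun x => (x.1, x.1)) ?_ ?_ ?_
  · intro x y h
    simp only [Prod.mk.injEq] at h
    exact Subtype.ext h.1
  · rintro ⟨m, j⟩ hf
    have hj : m = j := by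
      by_contra h
      exact hf (by simp [h])
    exact ⟨⟨m, hg _⟩, by simp [hj]⟩
  · rintro ⟨n, -⟩
    simp

noncomputable def S (s : ℕ) : ℝ≥0∞ := ∑' n : ℕ, ENNReal.ofReal (1 / ((n : ℝ) + 1) ^ s)

noncomputable def Z (a b : ℕ) : ℝ≥0∞ :=
  ∑' p : ℕ × ℕ, ENNReal.ofReal (1 / (((p.1 : ℝ) + (p.2 : ℝ) + 2) ^ a * ((p.1 : ℝ) + 1) ^ b))

lemma sum_shift (s : ℕ) (hs : 2 ≤ s) : Summable (fun n : ℕ => 1 / ((n : ℝ) + 1) ^ s) := by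
  have h := Real.summable_one_div_nat_pow.mpr (by omega : 1 < s)
  exact ((summable_nat_add_iff 1).mpr h).congr fun n => by push_cast; ring

lemma S_eq (s : ℕ) (hs : 2 ≤ s) :
    S s = ENNReal.ofReal (∑' n : ℕ, 1 / ((n : ℝ) + 1) ^ s) :=
  (ENNReal.ofReal_tsum_of_nonneg (fun n => by positivity) (sum_shift s hs)).symm

lemma S_ne_top (s : ℕ) (hs : 2 ≤ s) : S s ≠ ⊤ := by
  rw [S_eq s hs]; exact ENNReal.ofReal_ne_top

lemma tsum_prod_mul (f g : ℕ → ℝ≥0∞) :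
    ∑' p : ℕ × ℕ, f p.1 * g p.2 = (∑' n, f n) * ∑' n, g n := by
  rw [ENNReal.tsum_prod']
  simp_rw [ENNReal.tsum_mul_left, ENNReal.tsum_mul_right]

lemma Z_ne_top (a b : ℕ)
    (h : ∀ n k : ℕ, ((n : ℝ) + 1) ^ 2 * ((k : ℝ) + 1) ^ 2
        ≤ ((n : ℝ) + (k : ℝ) + 2) ^ a * ((n : ℝ) + 1) ^ b) :
    Z a b ≠ ⊤ := by
  have hb : Z a b ≤ S 2 * S 2 := by
    rw [S, ← tsum_prod_mul]
    refine ENNReal.tsum_le_tsum fun p => ?_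
    rw [← ENNReal.ofReal_mul (by positivity)]
    refine ENNReal.ofReal_le_ofReal ?_
    rw [div_mul_div_comm, one_mul]
    exact one_div_le_one_div_of_le (by positivity) (h p.1 p.2)
  exact ne_top_of_le_ne_top (ENNReal.mul_ne_top (S_ne_top 2 le_rfl) (S_ne_top 2 le_rfl)) hb

lemma Z23_ne_top : Z 2 3 ≠ ⊤ := by
  refine Z_ne_top 2 3 fun n k => ?_
  have hn : (0:ℝ) ≤ (n:ℝ) := Nat.cast_nonneg n
  have hk : (0:ℝ) ≤ (k:ℝ) := Nat.cast_nonneg k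
  calc ((n:ℝ)+1)^2*((k:ℝ)+1)^2 = ((k:ℝ)+1)^2*((n:ℝ)+1)^2 := by ring
    _ ≤ ((n:ℝ)+(k:ℝ)+2)^2*((n:ℝ)+1)^3 :=
      mul_le_mul (pow_le_pow_left₀ (by linarith) (by linarith) 2)
        (pow_le_pow_right₀ (by linarith) (by norm_num)) (by positivity) (by positivity)

lemma Z32_ne_top : Z 3 2 ≠ ⊤ := by
  refine Z_ne_top 3 2 fun n k => ?_
  have hn : (0:ℝ) ≤ (n:ℝ) := Nat.cast_nonneg n
  have hk : (0:ℝ) ≤ (k:ℝ) := Nat.cast_nonneg k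
  calc ((n:ℝ)+1)^2*((k:ℝ)+1)^2 = ((k:ℝ)+1)^2*((n:ℝ)+1)^2 := by ring
    _ ≤ ((n:ℝ)+(k:ℝ)+2)^3*((n:ℝ)+1)^2 := by
      refine mul_le_mul ?_ le_rfl (by positivity) (by positivity)
      calc ((k:ℝ)+1)^2 ≤ ((n:ℝ)+(k:ℝ)+2)^2 := pow_le_pow_left₀ (by linarith) (by linarith) 2
        _ ≤ ((n:ℝ)+(k:ℝ)+2)^3 := pow_le_pow_right₀ (by linarith) (by norm_num)

lemma Z41_ne_top : Z 4 1 ≠ ⊤ := by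
  refine Z_ne_top 4 1 fun n k => ?_
  have hn : (0:ℝ) ≤ (n:ℝ) := Nat.cast_nonneg n
  have hk : (0:ℝ) ≤ (k:ℝ) := Nat.cast_nonneg k
  calc ((n:ℝ)+1)^2*((k:ℝ)+1)^2
      ≤ (((n:ℝ)+(k:ℝ)+2)^2)*(((n:ℝ)+(k:ℝ)+2)^2) :=
        mul_le_mul (pow_le_pow_left₀ (by linarith) (by linarith) 2)
          (pow_le_pow_left₀ (by linarith) (by linarith) 2) (by positivity) (by positivity)
    _ = ((n:ℝ)+(k:ℝ)+2)^4*1 := by ring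
    _ ≤ ((n:ℝ)+(k:ℝ)+2)^4*((n:ℝ)+1)^1 :=
        mul_le_mul_of_nonneg_left (by simp) (by positivity)

lemma key_partial (n : ℕ) : ∀ K : ℕ,
    ∑ k ∈ range K, 1 / (((k:ℝ) + 1) * ((n:ℝ) + (k:ℝ) + 2))
      = ((∑ j ∈ range (n+1), 1 / ((j:ℝ) + 1))
          - ∑ i ∈ range (n+1), 1 / ((K:ℝ) + (i:ℝ) + 1)) / ((n:ℝ) + 1) := by
  intro K
  induction K with
  | zero => simp
  | succ K ih =>
    rw [sum_range_succ, ih]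
    have tele : ∑ i ∈ range (n+1), (1 / ((K:ℝ) + (i:ℝ) + 1) - 1 / ((K:ℝ) + (i:ℝ) + 2))
        = 1 / ((K:ℝ) + 1) - 1 / ((K:ℝ) + (n:ℝ) + 2) := by
      have h := Finset.sum_range_sub' (f := fun i : ℕ => 1 / ((K:ℝ) + (i:ℝ) + 1)) (n+1)
      have h2 : ∀ i : ℕ, 1 / ((K:ℝ) + ((i+1 : ℕ):ℝ) + 1) = 1 / ((K:ℝ) + (i:ℝ) + 2) := by
        intro i; push_cast; ring_nf
      calc ∑ i ∈ range (n+1), (1 / ((K:ℝ) + (i:ℝ) + 1) - 1 / ((K:ℝ) + (i:ℝ) + 2))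
          = ∑ i ∈ range (n+1), (1 / ((K:ℝ) + (i:ℝ) + 1) - 1 / ((K:ℝ) + ((i+1:ℕ):ℝ) + 1)) := by
            exact Finset.sum_congr rfl fun i _ => by rw [h2]
        _ = 1 / ((K:ℝ) + ((0:ℕ):ℝ) + 1) - 1 / ((K:ℝ) + ((n+1:ℕ):ℝ) + 1) := h
        _ = 1 / ((K:ℝ) + 1) - 1 / ((K:ℝ) + (n:ℝ) + 2) := by push_cast; ring_nf
    have hsub : ∑ i ∈ range (n+1), 1 / ((K:ℝ) + (i:ℝ) + 1)
        - ∑ i ∈ range (n+1), 1 / (((K+1:ℕ):ℝ) + (i:ℝ) + 1)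
        = 1 / ((K:ℝ) + 1) - 1 / ((K:ℝ) + (n:ℝ) + 2) := by
      rw [← Finset.sum_sub_distrib]
      rw [← tele]
      exact Finset.sum_congr rfl fun i _ => by push_cast; ring_nf
    have hK : (0:ℝ) < (K:ℝ) + 1 := by positivity
    have hn1 : (0:ℝ) < (n:ℝ) + 1 := by positivity
    have hnk : (0:ℝ) < (K:ℝ) + (n:ℝ) + 2 := by positivity
    have hfrac : 1 / (((K:ℝ) + 1) * ((n:ℝ) + (K:ℝ) + 2))
        = (1 / ((K:ℝ) + 1) - 1 / ((K:ℝ) + (n:ℝ) + 2)) / ((n:ℝ) + 1) := by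
      field_simp
      ring
    rw [hfrac, ← hsub]
    ring
lemma tel (n : ℕ) :
    HasSum (fun k : ℕ => 1 / (((k:ℝ) + 1) * ((n:ℝ) + (k:ℝ) + 2)))
      ((∑ j ∈ range (n+1), 1 / ((j:ℝ) + 1)) / ((n:ℝ) + 1)) := by
  rw [hasSum_iff_tendsto_nat_of_nonneg (fun k => by positivity)]
  simp only [key_partial n]
  have h0 : Tendsto (fun K : ℕ => ∑ i ∈ range (n+1), 1 / ((K:ℝ) + (i:ℝ) + 1))
      atTop (𝓝 0) := by
    have : ∀ i : ℕ, Tendsto (fun K : ℕ => 1 / ((K:ℝ) + (i:ℝ) + 1)) atTop (𝓝 0) := by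
      intro i
      simp only [one_div]
      refine Tendsto.inv_tendsto_atTop ?_
      exact tendsto_atTop_add_const_right atTop ((i:ℝ) + 1)
        (by simpa using tendsto_natCast_atTop_atTop (R := ℝ)) |>.congr (fun K => by ring)
    simpa using tendsto_finset_sum (range (n+1)) (fun i _ => this i)
  have h1 : Tendsto (fun K : ℕ => ((∑ j ∈ range (n+1), 1 / ((j:ℝ) + 1))
      - ∑ i ∈ range (n+1), 1 / ((K:ℝ) + (i:ℝ) + 1)) / ((n:ℝ) + 1)) atTop
      (𝓝 (((∑ j ∈ range (n+1), 1 / ((j:ℝ) + 1)) - 0) / ((n:ℝ) + 1))) :=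
    (Tendsto.sub tendsto_const_nhds h0).div_const ((n:ℝ) + 1)
  simpa using h1
lemma inner_eval (n : ℕ) :
    (∑' k : ℕ, ENNReal.ofReal (1 / (((k:ℝ)+1) * ((n:ℝ)+(k:ℝ)+2) * ((n:ℝ)+1)^3)))
      = ∑' j : ℕ, (if j ≤ n then ENNReal.ofReal (1 / (((n:ℝ)+1)^4 * ((j:ℝ)+1))) else 0) := by
  have htel := tel n
  have hsum := htel.summable
  calc (∑' k : ℕ, ENNReal.ofReal (1 / (((k:ℝ)+1) * ((n:ℝ)+(k:ℝ)+2) * ((n:ℝ)+1)^3)))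
      = ∑' k : ℕ, ENNReal.ofReal (1/((n:ℝ)+1)^3)
          * ENNReal.ofReal (1/(((k:ℝ)+1)*((n:ℝ)+(k:ℝ)+2))) :=
        tsum_congr fun k => by
          rw [← ENNReal.ofReal_mul (by positivity), div_mul_div_comm, one_mul]
          congr 1
          ring
    _ = ENNReal.ofReal (1/((n:ℝ)+1)^3)
          * ∑' k : ℕ, ENNReal.ofReal (1/(((k:ℝ)+1)*((n:ℝ)+(k:ℝ)+2))) := ENNReal.tsum_mul_left
    _ = ENNReal.ofReal (1/((n:ℝ)+1)^3
          * ((∑ j ∈ range (n+1), 1 / ((j:ℝ) + 1)) / ((n:ℝ) + 1))) := by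
        rw [← ENNReal.ofReal_tsum_of_nonneg (fun k => by positivity) hsum, htel.tsum_eq,
          ← ENNReal.ofReal_mul (by positivity)]
    _ = ∑ j ∈ range (n+1), ENNReal.ofReal (1/(((n:ℝ)+1)^4 * ((j:ℝ)+1))) := by
        rw [show 1/((n:ℝ)+1)^3 * ((∑ j ∈ range (n+1), 1 / ((j:ℝ) + 1)) / ((n:ℝ) + 1))
            = ∑ j ∈ range (n+1), 1/(((n:ℝ)+1)^4 * ((j:ℝ)+1)) by
          rw [Finset.sum_div, Finset.mul_sum]
          exact Finset.sum_congr rfl fun j _ => by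
            have h1 : ((n:ℝ)+1) ≠ 0 := by positivity
            have h2 : ((j:ℝ)+1) ≠ 0 := by positivity
            field_simp]
        exact ENNReal.ofReal_sum_of_nonneg fun j _ => by positivity
    _ = ∑' j : ℕ, (if j ≤ n then ENNReal.ofReal (1 / (((n:ℝ)+1)^4 * ((j:ℝ)+1))) else 0) := by
        rw [tsum_eq_sum (s := range (n+1))
          (fun j hj => if_neg (by simp only [mem_range] at hj; omega))]
        exact (Finset.sum_congr rfl fun j hj =>
          (if_pos (by simp only [mem_range] at hj; omega)).symm)

lemma ofReal_pos_ne_zero {x : ℝ} (hx : 0 < x) : ENNReal.ofReal x ≠ 0 :=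
  ne_of_gt (ENNReal.ofReal_pos.mpr hx)

lemma stuffle : S 2 * S 3 = Z 2 3 + Z 3 2 + S 5 := by
  set F : ℕ × ℕ → ℝ≥0∞ :=
    fun p => ENNReal.ofReal (1 / (((p.1:ℝ)+1)^2 * ((p.2:ℝ)+1)^3)) with hFdef
  have hF : ∀ p, F p ≠ 0 := fun p => ofReal_pos_ne_zero (by positivity)
  have h1 : S 2 * S 3 = ∑' p : ℕ × ℕ, F p := by
    rw [S, S, ← tsum_prod_mul]
    exact tsum_congr fun p => by
      rw [hFdef, ← ENNReal.ofReal_mul (by positivity), div_mul_div_comm, one_mul]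
  have hdec : ∀ p : ℕ × ℕ, F p = (if p.2 < p.1 then F p else 0)
      + (if p.1 < p.2 then F p else 0) + (if p.1 = p.2 then F p else 0) := by
    intro p
    rcases Nat.lt_trichotomy p.1 p.2 with h | h | h
    · rw [if_neg (by omega), if_pos h, if_neg (by omega)]; simp
    · rw [if_neg (by omega), if_neg (by omega), if_pos h]; simp
    · rw [if_pos h, if_neg (by omega), if_neg (by omega)]; simp
  have e1 : (∑' p : ℕ × ℕ, F (p.1 + p.2 + 1, p.1)) = Z 2 3 := by
    rw [Z]
    exact tsum_congr fun p => congrArg ENNReal.ofReal (by push_cast; ring)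
  have e2 : (∑' p : ℕ × ℕ, F (p.1, p.1 + p.2 + 1)) = Z 3 2 := by
    rw [Z]
    exact tsum_congr fun p => congrArg ENNReal.ofReal (by push_cast; ring)
  have e3 : (∑' n : ℕ, F (n, n)) = S 5 := by
    rw [S]
    exact tsum_congr fun n => congrArg ENNReal.ofReal (by push_cast; ring)
  rw [h1, tsum_congr hdec, ENNReal.tsum_add, ENNReal.tsum_add,
    tsum_lower F hF, tsum_upper F hF, tsum_diag F hF, e1, e2, e3]

lemma P1 (n k : ℕ) :
    1 / (((k:ℝ)+1) * ((n:ℝ)+(k:ℝ)+2) * ((n:ℝ)+1)^3)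
      = 1/(((n:ℝ)+(k:ℝ)+2)^2 * ((n:ℝ)+1)^3) + 1/(((n:ℝ)+(k:ℝ)+2)^3 * ((n:ℝ)+1)^2)
        + 1/(((n:ℝ)+(k:ℝ)+2)^4 * ((n:ℝ)+1)^1) + 1/(((k:ℝ)+1) * ((n:ℝ)+(k:ℝ)+2)^4) := by
  have h1 : ((k:ℝ)+1) ≠ 0 := by positivity
  have h2 : ((n:ℝ)+1) ≠ 0 := by positivity
  have h3 : ((n:ℝ)+(k:ℝ)+2) ≠ 0 := by positivity
  field_simp
  ring

lemma hA1 : (∑' p : ℕ × ℕ,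
      ENNReal.ofReal (1 / (((p.2:ℝ)+1) * ((p.1:ℝ)+(p.2:ℝ)+2) * ((p.1:ℝ)+1)^3)))
    = Z 2 3 + Z 3 2 + Z 4 1
      + ∑' p : ℕ × ℕ, ENNReal.ofReal (1 / (((p.2:ℝ)+1) * ((p.1:ℝ)+(p.2:ℝ)+2)^4)) := by
  rw [Z, Z, Z, ← ENNReal.tsum_add, ← ENNReal.tsum_add, ← ENNReal.tsum_add]
  refine tsum_congr fun p => ?_
  rw [← ENNReal.ofReal_add (by positivity) (by positivity),
    ← ENNReal.ofReal_add (by positivity) (by positivity),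
    ← ENNReal.ofReal_add (by positivity) (by positivity)]
  exact congrArg ENNReal.ofReal (P1 p.1 p.2)

lemma hB : (∑' p : ℕ × ℕ, ENNReal.ofReal (1 / (((p.2:ℝ)+1) * ((p.1:ℝ)+(p.2:ℝ)+2)^4)))
    = Z 4 1 := by
  rw [Z]
  calc (∑' p : ℕ × ℕ, ENNReal.ofReal (1 / (((p.2:ℝ)+1) * ((p.1:ℝ)+(p.2:ℝ)+2)^4)))
      = ∑' p : ℕ × ℕ,
          (fun q : ℕ × ℕ =>
            ENNReal.ofReal (1 / (((q.1:ℝ) + (q.2:ℝ) + 2) ^ 4 * ((q.1:ℝ) + 1) ^ 1)))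
          ((Equiv.prodComm ℕ ℕ) p) :=
        tsum_congr fun p => by
          simp only [Equiv.prodComm_apply, Prod.fst_swap, Prod.snd_swap]
          exact congrArg ENNReal.ofReal (by push_cast; ring)
    _ = _ := (Equiv.prodComm ℕ ℕ).tsum_eq
          (fun q : ℕ × ℕ =>
            ENNReal.ofReal (1 / (((q.1:ℝ) + (q.2:ℝ) + 2) ^ 4 * ((q.1:ℝ) + 1) ^ 1)))

lemma hA2 : (∑' p : ℕ × ℕ,
      ENNReal.ofReal (1 / (((p.2:ℝ)+1) * ((p.1:ℝ)+(p.2:ℝ)+2) * ((p.1:ℝ)+1)^3)))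
    = Z 4 1 + S 5 := by
  set G : ℕ × ℕ → ℝ≥0∞ :=
    fun p => ENNReal.ofReal (1 / (((p.1:ℝ)+1)^4 * ((p.2:ℝ)+1))) with hGdef
  have hG : ∀ p, G p ≠ 0 := fun p => ofReal_pos_ne_zero (by positivity)
  have step1 : (∑' p : ℕ × ℕ,
      ENNReal.ofReal (1 / (((p.2:ℝ)+1) * ((p.1:ℝ)+(p.2:ℝ)+2) * ((p.1:ℝ)+1)^3)))
      = ∑' p : ℕ × ℕ, (if p.2 ≤ p.1 then G p else 0) := by
    rw [ENNReal.tsum_prod', ENNReal.tsum_prod']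
    exact tsum_congr fun n => inner_eval n
  have hdec : ∀ p : ℕ × ℕ, (if p.2 ≤ p.1 then G p else 0)
      = (if p.2 < p.1 then G p else 0) + (if p.1 = p.2 then G p else 0) := by
    intro p
    rcases Nat.lt_trichotomy p.1 p.2 with h | h | h
    · rw [if_neg (by omega), if_neg (by omega), if_neg (by omega)]; simp
    · rw [if_pos (by omega), if_neg (by omega), if_pos h]; simp
    · rw [if_pos (by omega), if_pos h, if_neg (by omega)]; simp
  have e1 : (∑' p : ℕ × ℕ, G (p.1 + p.2 + 1, p.1)) = Z 4 1 := by
    rw [Z]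
    exact tsum_congr fun p => congrArg ENNReal.ofReal (by push_cast; ring)
  have e2 : (∑' n : ℕ, G (n, n)) = S 5 := by
    rw [S]
    exact tsum_congr fun n => congrArg ENNReal.ofReal (by push_cast; ring)
  rw [step1, tsum_congr hdec, ENNReal.tsum_add, tsum_lower G hG, tsum_diag G hG, e1, e2]

lemma bridge : (∑' p : ℕ × ℕ, ENNReal.ofReal
      (if 1 ≤ p.2 ∧ p.2 < p.1 then (1 : ℝ) / ((p.1 : ℝ) ^ 4 * p.2) else 0))
    = Z 4 1 := by
  rw [Z]
  refine tsum_eq_tsum_of_ne_zero_bij (fun x => (x.1.1 + x.1.2 + 2, x.1.1 + 1)) ?_ ?_ ?_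
  · intro x y h
    simp only [Prod.mk.injEq] at h
    obtain ⟨h1, h2⟩ := h
    exact Subtype.ext (Prod.ext (by omega) (by omega))
  · rintro ⟨m, j⟩ hf
    have hc : 1 ≤ j ∧ j < m := by
      by_contra h
      exact hf (by simp only [mem_support, ne_eq, not_not]; rw [if_neg h]; simp)
    refine ⟨⟨(j - 1, m - j - 1), ofReal_pos_ne_zero (by positivity)⟩, ?_⟩
    simp only [Prod.mk.injEq]
    omega
  · rintro ⟨⟨n, k⟩, -⟩
    simp only
    rw [if_pos ⟨by omega, by omega⟩]
    exact congrArg ENNReal.ofReal (by push_cast; ring)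

lemma summable_of_ofReal_ne_top {ι : Type*} {f : ι → ℝ} (h0 : ∀ i, 0 ≤ f i)
    (h : (∑' i, ENNReal.ofReal (f i)) ≠ ⊤) : Summable f := by
  have h' : (∑' i, ((Real.toNNReal (f i) : ℝ≥0) : ℝ≥0∞)) ≠ ⊤ := by
    simpa [ENNReal.ofReal] using h
  have hs := ENNReal.tsum_coe_ne_top_iff_summable.mp h'
  exact (NNReal.summable_coe.mpr hs).congr fun i => Real.coe_toNNReal _ (h0 i)


lemma sum_theorem : Z 2 3 + Z 3 2 + Z 4 1 = S 5 := by
  have e0 := hA1.symm.trans hA2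
  rw [hB] at e0
  refine (ENNReal.add_right_inj Z41_ne_top).mp ?_
  calc Z 4 1 + (Z 2 3 + Z 3 2 + Z 4 1) = Z 2 3 + Z 3 2 + Z 4 1 + Z 4 1 := by ring
    _ = Z 4 1 + S 5 := e0

lemma key : Z 4 1 + S 2 * S 3 = 2 * S 5 := by
  calc Z 4 1 + S 2 * S 3 = Z 4 1 + (Z 2 3 + Z 3 2 + S 5) := by rw [stuffle]
    _ = Z 2 3 + Z 3 2 + Z 4 1 + S 5 := by ring
    _ = S 5 + S 5 := by rw [sum_theorem]
    _ = 2 * S 5 := by ring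

end Zeta41Proof

open Zeta41Proof in
/-- ζ(4,1) = 2ζ(5) − ζ(2)ζ(3). -/
theorem zeta41_eval :
    (∑' p : ℕ × ℕ, if 1 ≤ p.2 ∧ p.2 < p.1 then (1 : ℝ) / ((p.1 : ℝ) ^ 4 * p.2) else 0)
      = 2 * (∑' n : ℕ, (1 : ℝ) / ((n : ℝ) + 1) ^ 5)
        - (∑' n : ℕ, (1 : ℝ) / ((n : ℝ) + 1) ^ 2) * (∑' n : ℕ, (1 : ℝ) / ((n : ℝ) + 1) ^ 3) := by
  set f : ℕ × ℕ → ℝ :=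
    fun p => if 1 ≤ p.2 ∧ p.2 < p.1 then (1 : ℝ) / ((p.1 : ℝ) ^ 4 * p.2) else 0 with hfdef
  have hfnn : ∀ p, 0 ≤ f p := by
    intro p
    rw [hfdef]
    dsimp only
    split
    · positivity
    · exact le_rfl
  have hofReal_f : (∑' p : ℕ × ℕ, ENNReal.ofReal (f p)) = Z 4 1 := bridge
  have hsumm : Summable f :=
    summable_of_ofReal_ne_top hfnn (by rw [hofReal_f]; exact Z41_ne_top)
  have hx : ENNReal.ofReal (∑' p : ℕ × ℕ, f p) = Z 4 1 := by
    rw [ENNReal.ofReal_tsum_of_nonneg hfnn hsumm, hofReal_f]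
  have hs2 : S 2 = ENNReal.ofReal (∑' n : ℕ, (1 : ℝ) / ((n : ℝ) + 1) ^ 2) := S_eq 2 (by norm_num)
  have hs3 : S 3 = ENNReal.ofReal (∑' n : ℕ, (1 : ℝ) / ((n : ℝ) + 1) ^ 3) := S_eq 3 (by norm_num)
  have hs5 : S 5 = ENNReal.ofReal (∑' n : ℕ, (1 : ℝ) / ((n : ℝ) + 1) ^ 5) := S_eq 5 (by norm_num)
  have hk := key
  rw [← hx, hs2, hs3, hs5] at hk
  have hxnn : 0 ≤ ∑' p : ℕ × ℕ, f p := tsum_nonneg hfnn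
  have h2nn : 0 ≤ ∑' n : ℕ, (1 : ℝ) / ((n : ℝ) + 1) ^ 2 := tsum_nonneg fun n => by positivity
  have h3nn : 0 ≤ ∑' n : ℕ, (1 : ℝ) / ((n : ℝ) + 1) ^ 3 := tsum_nonneg fun n => by positivity
  have h5nn : 0 ≤ ∑' n : ℕ, (1 : ℝ) / ((n : ℝ) + 1) ^ 5 := tsum_nonneg fun n => by positivity
  rw [← ENNReal.ofReal_mul h2nn, ← ENNReal.ofReal_add hxnn (mul_nonneg h2nn h3nn),
    ← ENNReal.ofReal_ofNat 2, ← ENNReal.ofReal_mul (by norm_num)] at hk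
  have := (ENNReal.ofReal_eq_ofReal_iff
    (by positivity) (by positivity)).mp hk
  linarith [this]
end

section
/- The double zeta value ζ(3,2) = ∑_{m>n≥1} 1/(m³ n²) equals 3ζ(2)ζ(3) − (11/2)ζ(5). -/
open Finset Function Filter Topology

namespace Zeta32

/-- Building block: `1/((m+1)^a (n+1)^b (m+n+2)^c)` indexed by `p = (m,n) : ℕ × ℕ`. -/
noncomputable def t (a b c : ℕ) (p : ℕ × ℕ) : ℝ :=
  1 / (((p.1 : ℝ) + 1) ^ a * ((p.2 : ℝ) + 1) ^ b * ((p.1 : ℝ) + (p.2 : ℝ) + 2) ^ c)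

/-- `A a b c = ∑_{m,n ≥ 1} 1/(m^a n^b (m+n)^c)`. -/
noncomputable def A (a b c : ℕ) : ℝ := ∑' p : ℕ × ℕ, t a b c p

lemma t_nonneg (a b c : ℕ) (p : ℕ × ℕ) : 0 ≤ t a b c p := by
  unfold t; positivity

lemma zsum (k : ℕ) (hk : 2 ≤ k) : Summable (fun n : ℕ => 1 / ((n : ℝ) + 1) ^ k) := by
  have := (summable_nat_add_iff 1).mpr (Real.summable_one_div_nat_pow.mpr hk)
  refine this.congr fun n => ?_
  push_cast; ring

lemma zsum_nonneg (k : ℕ) (n : ℕ) : 0 ≤ 1 / ((n : ℝ) + 1) ^ k := by positivity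

lemma sum_g (s u : ℕ) (hs : 2 ≤ s) (hu : 2 ≤ u) :
    Summable (fun p : ℕ × ℕ => 1 / (((p.1 : ℝ) + 1) ^ s * ((p.2 : ℝ) + 1) ^ u)) := by
  have := Summable.mul_of_nonneg (zsum s hs) (zsum u hu) (zsum_nonneg s) (zsum_nonneg u)
  refine this.congr fun p => ?_
  rw [div_mul_div_comm, one_mul]

lemma summable_t (a b c i j : ℕ) (hij : i + j ≤ c) (ha : 2 ≤ a + i) (hb : 2 ≤ b + j) :
    Summable (t a b c) := by
  refine Summable.of_nonneg_of_le (t_nonneg a b c) (fun p => ?_) (sum_g 2 2 le_rfl le_rfl)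
  set M : ℝ := (p.1 : ℝ) + 1 with hM
  set N : ℝ := (p.2 : ℝ) + 1 with hN
  have hM1 : (1:ℝ) ≤ M := by simp [hM]
  have hN1 : (1:ℝ) ≤ N := by simp [hN]
  have hS : (p.1 : ℝ) + (p.2 : ℝ) + 2 = M + N := by rw [hM, hN]; ring
  unfold t
  rw [hS]
  have hMS : M ≤ M + N := by linarith
  have hNS : N ≤ M + N := by linarith
  have hS1 : (1:ℝ) ≤ M + N := by linarith
  have key : M ^ 2 * N ^ 2 ≤ M ^ a * N ^ b * (M + N) ^ c := by
    calc M ^ 2 * N ^ 2 ≤ M ^ (a + i) * N ^ (b + j) := by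
          have h1 : M ^ 2 ≤ M ^ (a+i) := by gcongr
          have h2 : N ^ 2 ≤ N ^ (b+j) := by gcongr
          have := mul_le_mul h1 h2 (by positivity) (by positivity)
          linarith
      _ = (M ^ a * N ^ b) * (M ^ i * N ^ j) := by rw [pow_add, pow_add]; ring
      _ ≤ (M ^ a * N ^ b) * ((M+N) ^ i * (M+N) ^ j) := by
          gcongr <;> first | exact hMS | exact hNS | positivity
      _ = (M ^ a * N ^ b) * (M+N) ^ (i + j) := by rw [pow_add]
      _ ≤ (M ^ a * N ^ b) * (M+N) ^ c := by
          gcongr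
  exact one_div_le_one_div_of_le (by positivity) key

lemma A_symm (a b c : ℕ) : A a b c = A b a c := by
  unfold A
  rw [← (Equiv.prodComm ℕ ℕ).tsum_eq (t a b c)]
  refine tsum_congr fun p => ?_
  unfold t
  simp only [Equiv.prodComm_apply, Prod.fst_swap, Prod.snd_swap]
  ring_nf

-- pointwise partial fraction helper
lemma pf_positivity (p : ℕ × ℕ) :
    (0:ℝ) < ((p.1 : ℝ) + 1) ∧ (0:ℝ) < ((p.2 : ℝ) + 1) ∧ (0:ℝ) < ((p.1 : ℝ) + (p.2 : ℝ) + 2) :=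
  ⟨by positivity, by positivity, by positivity⟩

lemma eq2 : A 3 1 1 = A 2 1 2 + A 3 0 2 := by
  unfold A
  rw [← Summable.tsum_add (summable_t 2 1 2 0 1 (by norm_num) (by norm_num) (by norm_num))
        (summable_t 3 0 2 0 2 (by norm_num) (by norm_num) (by norm_num))]
  refine tsum_congr fun p => ?_
  obtain ⟨h1, h2, h3⟩ := pf_positivity p
  unfold t
  field_simp
  ring

lemma eq3 : A 3 1 1 + A 2 2 1 = A 2 3 0 := by
  rw [show A 3 1 1 = A 1 3 1 from (A_symm 1 3 1).symm]
  unfold A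
  rw [← Summable.tsum_add (summable_t 1 3 1 1 0 (by norm_num) (by norm_num) (by norm_num))
        (summable_t 2 2 1 0 0 (by norm_num) (by norm_num) (by norm_num))]
  refine tsum_congr fun p => ?_
  obtain ⟨h1, h2, h3⟩ := pf_positivity p
  unfold t
  field_simp
  ring

lemma eq4 : A 2 2 1 = A 2 1 2 + A 2 1 2 := by
  have h : A 2 2 1 = A 1 2 2 + A 2 1 2 := by
    unfold A
    rw [← Summable.tsum_add (summable_t 1 2 2 1 0 (by norm_num) (by norm_num) (by norm_num))
          (summable_t 2 1 2 0 1 (by norm_num) (by norm_num) (by norm_num))]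
    refine tsum_congr fun p => ?_
    obtain ⟨h1, h2, h3⟩ := pf_positivity p
    unfold t
    field_simp
    ring
  rw [h, A_symm 1 2 2]

lemma eq5 : A 2 1 2 = A 1 1 3 + A 2 0 3 := by
  unfold A
  rw [← Summable.tsum_add (summable_t 1 1 3 1 1 (by norm_num) (by norm_num) (by norm_num))
        (summable_t 2 0 3 0 2 (by norm_num) (by norm_num) (by norm_num))]
  refine tsum_congr fun p => ?_
  obtain ⟨h1, h2, h3⟩ := pf_positivity p
  unfold t
  field_simp
  ring

lemma eq6 : A 1 1 3 = A 1 0 4 + A 1 0 4 := by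
  have h : A 1 1 3 = A 0 1 4 + A 1 0 4 := by
    unfold A
    rw [← Summable.tsum_add (summable_t 0 1 4 2 1 (by norm_num) (by norm_num) (by norm_num))
          (summable_t 1 0 4 1 2 (by norm_num) (by norm_num) (by norm_num))]
    refine tsum_congr fun p => ?_
    obtain ⟨h1, h2, h3⟩ := pf_positivity p
    unfold t
    field_simp
    ring
  rw [h, A_symm 0 1 4]

lemma tsum_strict_lower (F : ℕ × ℕ → ℝ) (hF : ∀ p : ℕ × ℕ, ¬ p.2 < p.1 → F p = 0) :
    ∑' q : ℕ × ℕ, F (q.1 + q.2 + 1, q.2) = ∑' p, F p := by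
  have hg : Function.Injective (fun q : ℕ × ℕ => (q.1 + q.2 + 1, q.2)) := by
    intro a b h
    simp only [Prod.mk.injEq] at h
    exact Prod.ext (by omega) (by omega)
  refine hg.tsum_eq ?_
  intro p hp
  simp only [Function.mem_support] at hp
  have h2 : p.2 < p.1 := by by_contra h; exact hp (hF p h)
  exact ⟨(p.1 - p.2 - 1, p.2), Prod.ext (by simp; omega) (by simp)⟩

lemma tsum_strict_upper (F : ℕ × ℕ → ℝ) (hF : ∀ p : ℕ × ℕ, ¬ p.1 < p.2 → F p = 0) :
    ∑' q : ℕ × ℕ, F (q.1, q.1 + q.2 + 1) = ∑' p, F p := by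
  have hg : Function.Injective (fun q : ℕ × ℕ => (q.1, q.1 + q.2 + 1)) := by
    intro a b h
    simp only [Prod.mk.injEq] at h
    exact Prod.ext (by omega) (by omega)
  refine hg.tsum_eq ?_
  intro p hp
  simp only [Function.mem_support] at hp
  have h2 : p.1 < p.2 := by by_contra h; exact hp (hF p h)
  exact ⟨(p.1, p.2 - p.1 - 1), Prod.ext (by simp) (by simp; omega)⟩

lemma tsum_diag (F : ℕ × ℕ → ℝ) (hF : ∀ p : ℕ × ℕ, ¬ p.1 = p.2 → F p = 0) :
    ∑' n : ℕ, F (n, n) = ∑' p, F p := by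
  have hg : Function.Injective (fun n : ℕ => ((n, n) : ℕ × ℕ)) := by
    intro a b h
    simpa only [Prod.mk.injEq, and_self] using h
  refine hg.tsum_eq ?_
  intro p hp
  simp only [Function.mem_support] at hp
  have h2 : p.1 = p.2 := by by_contra h; exact hp (hF p h)
  exact ⟨p.1, Prod.ext (by simp) (by simp [h2])⟩

lemma tsum_strict2 (F : ℕ × ℕ → ℝ) (hF : ∀ p : ℕ × ℕ, ¬ (1 ≤ p.2 ∧ p.2 < p.1) → F p = 0) :
    ∑' q : ℕ × ℕ, F (q.1 + q.2 + 2, q.2 + 1) = ∑' p, F p := by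
  have hg : Function.Injective (fun q : ℕ × ℕ => (q.1 + q.2 + 2, q.2 + 1)) := by
    intro a b h
    simp only [Prod.mk.injEq] at h
    exact Prod.ext (by omega) (by omega)
  refine hg.tsum_eq ?_
  intro p hp
  simp only [Function.mem_support] at hp
  have h2 : 1 ≤ p.2 ∧ p.2 < p.1 := by by_contra h; exact hp (hF p h)
  exact ⟨(p.1 - p.2 - 1, p.2 - 1), Prod.ext (by simp; omega) (by simp; omega)⟩

lemma summable_ite (f : ℕ × ℕ → ℝ) (hf : Summable f) (hnn : ∀ p, 0 ≤ f p)
    (c : ℕ × ℕ → Prop) [DecidablePred c] :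
    Summable fun p => if c p then f p else 0 := by
  refine Summable.of_nonneg_of_le (fun p => ?_) (fun p => ?_) hf
  · split_ifs
    · exact hnn p
    · exact le_rfl
  · split_ifs
    · exact le_rfl
    · exact hnn p

lemma stuffle : A 2 3 0 = A 0 3 2 + A 2 0 3 + (∑' n : ℕ, 1 / ((n : ℝ) + 1) ^ 5) := by
  have hsum : Summable (t 2 3 0) := summable_t 2 3 0 0 0 (by norm_num) (by norm_num) (by norm_num)
  have h1 : Summable fun p : ℕ × ℕ => if p.2 < p.1 then t 2 3 0 p else 0 :=
    summable_ite _ hsum (t_nonneg 2 3 0) _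
  have h2 : Summable fun p : ℕ × ℕ => if p.1 < p.2 then t 2 3 0 p else 0 :=
    summable_ite _ hsum (t_nonneg 2 3 0) _
  have h3 : Summable fun p : ℕ × ℕ => if p.1 = p.2 then t 2 3 0 p else 0 :=
    summable_ite _ hsum (t_nonneg 2 3 0) _
  have split : A 2 3 0 = ∑' p : ℕ × ℕ,
      ((if p.2 < p.1 then t 2 3 0 p else 0) + (if p.1 < p.2 then t 2 3 0 p else 0)
        + (if p.1 = p.2 then t 2 3 0 p else 0)) := by
    refine tsum_congr fun p => ?_
    rcases lt_trichotomy p.1 p.2 with h | h | h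
    · rw [if_neg (by omega), if_pos h, if_neg (by omega)]; ring
    · rw [if_neg (by omega), if_neg (by omega), if_pos h]; ring
    · rw [if_pos h, if_neg (by omega), if_neg (by omega)]; ring
  rw [split, Summable.tsum_add (h1.add h2) h3, Summable.tsum_add h1 h2]
  congr 1
  · congr 1
    · rw [← tsum_strict_lower _ (fun p hp => if_neg hp)]
      refine tsum_congr fun q => ?_
      rw [if_pos (by omega)]
      unfold t
      push_cast
      ring_nf
    · rw [← tsum_strict_upper _ (fun p hp => if_neg hp)]
      refine tsum_congr fun q => ?_
      rw [if_pos (by omega)]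
      unfold t
      push_cast
      ring_nf
  · rw [← tsum_diag _ (fun p hp => if_neg hp)]
    refine tsum_congr fun n => ?_
    rw [if_pos rfl]
    unfold t
    push_cast
    ring_nf

lemma prod230 :
    (∑' n : ℕ, 1 / ((n : ℝ) + 1) ^ 2) * (∑' n : ℕ, 1 / ((n : ℝ) + 1) ^ 3) = A 2 3 0 := by
  have hf : Summable fun n : ℕ => ‖1 / ((n : ℝ) + 1) ^ 2‖ :=
    (zsum 2 le_rfl).congr fun n => (Real.norm_of_nonneg (zsum_nonneg 2 n)).symm
  have hg : Summable fun n : ℕ => ‖1 / ((n : ℝ) + 1) ^ 3‖ :=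
    (zsum 3 (by norm_num)).congr fun n => (Real.norm_of_nonneg (zsum_nonneg 3 n)).symm
  rw [tsum_mul_tsum_of_summable_norm hf hg]
  refine tsum_congr fun p => ?_
  unfold t
  rw [pow_zero, mul_one, div_mul_div_comm, one_mul]

lemma lhs_eq :
    (∑' p : ℕ × ℕ, if 1 ≤ p.2 ∧ p.2 < p.1 then (1 : ℝ) / ((p.1 : ℝ) ^ 3 * (p.2 : ℝ) ^ 2) else 0)
      = A 0 2 3 := by
  rw [← tsum_strict2 _ (fun p hp => if_neg hp)]
  refine tsum_congr fun q => ?_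
  rw [if_pos (by constructor <;> omega)]
  unfold t
  push_cast
  ring_nf

/-- Harmonic number `H n = ∑_{k<n} 1/(k+1)`. -/
noncomputable def H (n : ℕ) : ℝ := ∑ k ∈ range n, 1 / ((k : ℝ) + 1)

lemma g_tendsto (k : ℕ) :
    Tendsto (fun M : ℕ => 1 / (((M + k : ℕ) : ℝ) + 1)) atTop (𝓝 0) := by
  refine squeeze_zero (fun M => by positivity) (fun M => ?_)
    tendsto_one_div_add_atTop_nhds_zero_nat
  apply one_div_le_one_div_of_le
  · positivity
  · push_cast; linarith [Nat.cast_nonneg (α := ℝ) k]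

lemma tele (d : ℕ) :
    ∑' n : ℕ, (1 / ((n : ℝ) + 1) - 1 / (((n + d : ℕ) : ℝ) + 1)) = H d := by
  set g : ℕ → ℝ := fun n => 1 / ((n : ℝ) + 1) with hg
  have hsum : Summable (fun n : ℕ => g n - g (n + d)) := by
    refine Summable.of_nonneg_of_le (fun n => ?_) (fun n => ?_) ((zsum 2 le_rfl).mul_left (d:ℝ))
    · simp only [hg, sub_nonneg]
      apply one_div_le_one_div_of_le
      · positivity
      · push_cast; linarith [Nat.cast_nonneg (α := ℝ) d]
    · have hx : (0:ℝ) < (n : ℝ) + 1 := by positivity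
      have hy : (0:ℝ) < ((n + d : ℕ) : ℝ) + 1 := by positivity
      have key : g n - g (n + d) = (d : ℝ) / (((n : ℝ) + 1) * (((n + d : ℕ) : ℝ) + 1)) := by
        simp only [hg]
        field_simp
        push_cast; ring
      rw [key]
      calc (d : ℝ) / (((n : ℝ) + 1) * (((n + d : ℕ) : ℝ) + 1))
          ≤ (d : ℝ) / (((n : ℝ) + 1) * (((n : ℝ)) + 1)) := by
            refine div_le_div_of_nonneg_left (by positivity) (by positivity) ?_
            have hd : ((n:ℝ)) + 1 ≤ ((n + d : ℕ) : ℝ) + 1 := by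
              push_cast; linarith [Nat.cast_nonneg (α := ℝ) d]
            nlinarith
        _ = (d : ℝ) * (1 / ((n : ℝ) + 1) ^ 2) := by rw [mul_one_div, sq]
  have fin : ∀ M : ℕ, d ≤ M →
      ∑ n ∈ range M, (g n - g (n + d)) = H d - ∑ k ∈ range d, g (M + k) := by
    intro M hM
    rw [Finset.sum_sub_distrib]
    have e1 : ∑ n ∈ range M, g (n + d) = ∑ n ∈ Ico d (M + d), g n := by
      rw [Finset.sum_Ico_eq_sum_range]
      simp only [Nat.add_sub_cancel]
      exact Finset.sum_congr rfl fun n _ => by rw [Nat.add_comm]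
    have e2 : ∑ n ∈ Ico d (M + d), g n
        = ∑ n ∈ Ico d M, g n + ∑ n ∈ Ico M (M + d), g n := by
      rw [Finset.sum_Ico_consecutive _ hM (by omega)]
    have e3 : ∑ n ∈ range M, g n = H d + ∑ n ∈ Ico d M, g n := by
      have hH : H d = ∑ n ∈ Ico 0 d, g n := by
        unfold H
        rw [Finset.range_eq_Ico, hg]
      rw [Finset.range_eq_Ico, ← Finset.sum_Ico_consecutive _ (Nat.zero_le d) hM, hH]
    have e4 : ∑ n ∈ Ico M (M + d), g n = ∑ k ∈ range d, g (M + k) := by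
      rw [Finset.sum_Ico_eq_sum_range]
      simp only [Nat.add_sub_cancel_left]
    rw [e1, e2, e3, e4]
    ring
  have l1 : Tendsto (fun M : ℕ => ∑ k ∈ range d, g (M + k)) atTop (𝓝 0) := by
    have : Tendsto (fun M : ℕ => ∑ k ∈ range d, g (M + k)) atTop (𝓝 (∑ k ∈ range d, 0)) :=
      tendsto_finset_sum _ (fun k _ => g_tendsto k)
    simpa using this
  have l2 : Tendsto (fun M : ℕ => ∑ n ∈ range M, (g n - g (n + d))) atTop (𝓝 (H d)) := by
    have base : Tendsto (fun M : ℕ => H d - ∑ k ∈ range d, g (M + k)) atTop (𝓝 (H d)) := by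
      simpa using tendsto_const_nhds.sub l1
    refine base.congr' ?_
    filter_upwards [eventually_ge_atTop d] with M hM
    exact (fin M hM).symm
  have l3 := hsum.hasSum.tendsto_sum_nat
  exact tendsto_nhds_unique l3 l2

lemma A311_harm : A 3 1 1 = ∑' m : ℕ, 1 / ((m : ℝ) + 1) ^ 4 * H (m + 1) := by
  have hsum : Summable (t 3 1 1) := summable_t 3 1 1 0 1 (by norm_num) (by norm_num) (by norm_num)
  rw [A, Summable.tsum_prod' hsum hsum.prod_factor]
  refine tsum_congr fun m => ?_
  have inner : ∀ n : ℕ, t 3 1 1 (m, n)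
      = 1 / ((m : ℝ) + 1) ^ 4 * (1 / ((n : ℝ) + 1) - 1 / (((n + (m + 1) : ℕ) : ℝ) + 1)) := by
    intro n
    unfold t
    have h1 : (0:ℝ) < (m : ℝ) + 1 := by positivity
    have h2 : (0:ℝ) < (n : ℝ) + 1 := by positivity
    have h3 : (0:ℝ) < (m : ℝ) + (n : ℝ) + 2 := by positivity
    push_cast
    field_simp
    ring
  rw [tsum_congr inner, tsum_mul_left, tele (m + 1)]


lemma W_harm :
    A 0 1 4 + (∑' n : ℕ, 1 / ((n : ℝ) + 1) ^ 5)
      = ∑' m : ℕ, 1 / ((m : ℝ) + 1) ^ 4 * H (m + 1) := by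
  set u : ℕ × ℕ → ℝ := fun p => 1 / ((((p.2 : ℝ)) + 1) * (((p.1 : ℝ)) + 1) ^ 4) with hu
  have hu_nonneg : ∀ p, 0 ≤ u p := fun p => by simp only [hu]; positivity
  set G : ℕ × ℕ → ℝ := fun p => if p.2 ≤ p.1 then u p else 0 with hG
  have hGsum : Summable G := by
    refine Summable.of_nonneg_of_le (fun p => ?_) (fun p => ?_)
      (sum_g 3 2 (by norm_num) (by norm_num))
    · simp only [hG]; split_ifs; exacts [hu_nonneg p, le_rfl]
    · simp only [hG]
      split_ifs with h
      · have hk : ((p.2 : ℝ)) + 1 ≤ ((p.1 : ℝ)) + 1 := by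
          have := (Nat.cast_le (α := ℝ)).mpr h; linarith
        simp only [hu]
        apply one_div_le_one_div_of_le
        · positivity
        · calc ((p.1:ℝ) + 1) ^ 3 * ((p.2:ℝ) + 1) ^ 2
              = (((p.2:ℝ) + 1) * ((p.1:ℝ) + 1) ^ 3) * ((p.2:ℝ) + 1) := by ring
            _ ≤ (((p.2:ℝ) + 1) * ((p.1:ℝ) + 1) ^ 3) * ((p.1:ℝ) + 1) := by
                have hpos : (0:ℝ) ≤ ((p.2:ℝ) + 1) * ((p.1:ℝ) + 1) ^ 3 := by positivity
                exact mul_le_mul_of_nonneg_left hk hpos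
            _ = ((p.2:ℝ) + 1) * ((p.1:ℝ) + 1) ^ 4 := by ring
      · positivity
  -- iterated computation
  have iter : ∑' p : ℕ × ℕ, G p = ∑' m : ℕ, 1 / ((m : ℝ) + 1) ^ 4 * H (m + 1) := by
    rw [Summable.tsum_prod' hGsum hGsum.prod_factor]
    refine tsum_congr fun m => ?_
    have inner : ∑' k : ℕ, G (m, k) = ∑ k ∈ range (m + 1), u (m, k) := by
      rw [tsum_eq_sum (s := range (m + 1)) (f := fun k => G (m, k)) (fun k hk => ?_)]
      · refine Finset.sum_congr rfl fun k hk => ?_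
        simp only [hG]
        rw [if_pos (by simp at hk ⊢; omega)]
      · simp only [hG]
        rw [if_neg (by simp at hk ⊢; omega)]
    rw [inner, H, Finset.mul_sum]
    refine Finset.sum_congr rfl fun k _ => ?_
    simp only [hu]
    rw [mul_one_div, div_div]
    ring_nf
  -- splitting computation
  have hstrict : Summable fun p : ℕ × ℕ => if p.2 < p.1 then u p else 0 := by
    refine Summable.of_nonneg_of_le (fun p => ?_) (fun p => ?_) hGsum
    · split_ifs; exacts [hu_nonneg p, le_rfl]
    · simp only [hG]
      split_ifs with h1 h2
      · exact le_rfl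
      · omega
      · exact hu_nonneg p
      · exact le_rfl
  have hdiag : Summable fun p : ℕ × ℕ => if p.1 = p.2 then u p else 0 := by
    refine Summable.of_nonneg_of_le (fun p => ?_) (fun p => ?_) hGsum
    · split_ifs; exacts [hu_nonneg p, le_rfl]
    · simp only [hG]
      split_ifs with h1 h2
      · exact le_rfl
      · omega
      · exact hu_nonneg p
      · exact le_rfl
  have pointwise : ∀ p : ℕ × ℕ,
      G p = (if p.2 < p.1 then u p else 0) + (if p.1 = p.2 then u p else 0) := by
    intro p
    simp only [hG]
    rcases lt_trichotomy p.2 p.1 with h | h | h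
    · rw [if_pos (by omega), if_pos h, if_neg (by omega)]; ring
    · rw [if_pos (by omega), if_neg (by omega), if_pos (by omega)]; ring
    · rw [if_neg (by omega), if_neg (by omega), if_neg (by omega)]; ring
  have split : ∑' p : ℕ × ℕ, G p = A 0 1 4 + (∑' n : ℕ, 1 / ((n : ℝ) + 1) ^ 5) := by
    rw [tsum_congr pointwise, Summable.tsum_add hstrict hdiag]
    congr 1
    · rw [← tsum_strict_lower _ (fun p hp => if_neg hp), A]
      refine tsum_congr fun q => ?_
      rw [if_pos (by omega)]
      simp only [hu]
      unfold t
      push_cast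
      ring_nf
    · rw [← tsum_diag _ (fun p hp => if_neg hp)]
      refine tsum_congr fun n => ?_
      rw [if_pos rfl]
      simp only [hu]
      push_cast
      ring_nf
  rw [← split, iter]


lemma eq7 : A 3 1 1 = A 1 0 4 + (∑' n : ℕ, 1 / ((n : ℝ) + 1) ^ 5) := by
  rw [A_symm 1 0 4]
  exact A311_harm.trans W_harm.symm

end Zeta32

/-- ζ(3,2) = 3ζ(2)ζ(3) − (11/2)ζ(5). -/
theorem zeta32_eval :
    (∑' p : ℕ × ℕ, if 1 ≤ p.2 ∧ p.2 < p.1 then (1 : ℝ) / ((p.1 : ℝ) ^ 3 * (p.2 : ℝ) ^ 2) else 0)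
      = 3 * (∑' n : ℕ, (1 : ℝ) / ((n : ℝ) + 1) ^ 2) * (∑' n : ℕ, (1 : ℝ) / ((n : ℝ) + 1) ^ 3)
        - 11 / 2 * (∑' n : ℕ, (1 : ℝ) / ((n : ℝ) + 1) ^ 5) := by
  have P := Zeta32.prod230
  have e1 := Zeta32.stuffle
  have esym := Zeta32.A_symm 0 3 2
  have e2 := Zeta32.eq2
  have e3 := Zeta32.eq3
  have e4 := Zeta32.eq4
  have e5 := Zeta32.eq5
  have e6 := Zeta32.eq6
  have e7 := Zeta32.eq7
  rw [Zeta32.lhs_eq, Zeta32.A_symm 0 2 3, mul_assoc, P]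
  linarith [P, e1, esym, e2, e3, e4, e5, e6, e7]
end

section
/- The double zeta value ζ(5,1) = ∑_{m>n≥1} 1/(m⁵ n) equals (3/4)ζ(6) − (1/2)ζ(3)². -/
open Function

/-- Shifted zeta: ζ(a) = ∑ 1/(n+1)^a. -/
noncomputable def zs (a : ℕ) : ℝ := ∑' n : ℕ, (1 : ℝ) / ((n : ℝ) + 1) ^ a

/-- Summand of the shifted double zeta. -/
noncomputable def F (a b : ℕ) (p : ℕ × ℕ) : ℝ :=
  if p.2 < p.1 then (1 : ℝ) / (((p.1 : ℝ) + 1) ^ a * ((p.2 : ℝ) + 1) ^ b) else 0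

/-- Shifted double zeta ζ(a,b) = ∑_{m>n≥0} 1/((m+1)^a (n+1)^b). -/
noncomputable def Z2 (a b : ℕ) : ℝ := ∑' p : ℕ × ℕ, F a b p

lemma g2_summable : Summable (fun n : ℕ => (1 : ℝ) / ((n : ℝ) + 1) ^ 2) := by
  have h := (Real.summable_one_div_nat_pow (p := 2)).mpr (by norm_num)
  have := (summable_nat_add_iff (f := fun n : ℕ => (1 : ℝ) / (n : ℝ) ^ 2) 1).mpr h
  simpa [Nat.cast_add] using this

lemma g_nonneg (a : ℕ) : 0 ≤ fun n : ℕ => (1 : ℝ) / ((n : ℝ) + 1) ^ a :=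
  fun n => by positivity

lemma zs_summable (a : ℕ) (ha : 2 ≤ a) :
    Summable (fun n : ℕ => (1 : ℝ) / ((n : ℝ) + 1) ^ a) := by
  apply Summable.of_nonneg_of_le (fun n => by positivity) _ g2_summable
  intro n
  apply one_div_le_one_div_of_le (by positivity)
  have h1 : (1 : ℝ) ≤ (n : ℝ) + 1 := by
    have := Nat.cast_nonneg (α := ℝ) n; linarith
  exact pow_le_pow_right₀ h1 ha

lemma G_summable :
    Summable (fun p : ℕ × ℕ =>
      ((1 : ℝ) / ((p.1 : ℝ) + 1) ^ 2) * ((1 : ℝ) / ((p.2 : ℝ) + 1) ^ 2)) := by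
  have h := Summable.mul_of_nonneg (f := fun n : ℕ => (1 : ℝ) / ((n : ℝ) + 1) ^ 2)
    (g := fun n : ℕ => (1 : ℝ) / ((n : ℝ) + 1) ^ 2) g2_summable g2_summable
    (g_nonneg 2) (g_nonneg 2)
  exact h

lemma F_nonneg (a b : ℕ) (p : ℕ × ℕ) : 0 ≤ F a b p := by
  unfold F; split
  · positivity
  · exact le_rfl

lemma F_le (a b : ℕ) (ha : 2 ≤ a) (hb : 1 ≤ b) (hab : 4 ≤ a + b) (p : ℕ × ℕ) :
    F a b p ≤ ((1 : ℝ) / ((p.1 : ℝ) + 1) ^ 2) * ((1 : ℝ) / ((p.2 : ℝ) + 1) ^ 2) := by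
  unfold F
  split
  · rename_i h
    rw [div_mul_div_comm, one_mul]
    apply one_div_le_one_div_of_le (by positivity)
    set x : ℝ := (p.1 : ℝ) + 1 with hx
    set y : ℝ := (p.2 : ℝ) + 1 with hy
    have h1y : (1 : ℝ) ≤ y := by
      have := Nat.cast_nonneg (α := ℝ) p.2; simp only [hy]; linarith
    have hyx : y ≤ x := by
      simp only [hx, hy]
      have : (p.2 : ℝ) ≤ (p.1 : ℝ) := by exact_mod_cast h.le
      linarith
    have hy0 : (0 : ℝ) ≤ y := by linarith
    have e1 : (2 : ℕ) ≤ a + b - 2 := by omega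
    calc x ^ 2 * y ^ 2 ≤ x ^ 2 * y ^ (a + b - 2) := by
          apply mul_le_mul_of_nonneg_left _ (by positivity)
          exact pow_le_pow_right₀ h1y e1
      _ = x ^ 2 * (y ^ (a - 2) * y ^ b) := by
          rw [← pow_add]
          have : a + b - 2 = a - 2 + b := by omega
          rw [this]
      _ ≤ x ^ 2 * (x ^ (a - 2) * y ^ b) := by
          apply mul_le_mul_of_nonneg_left _ (by positivity)
          apply mul_le_mul_of_nonneg_right _ (by positivity)
          exact pow_le_pow_left₀ hy0 hyx _
      _ = x ^ a * y ^ b := by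
          rw [← mul_assoc, ← pow_add]
          have : 2 + (a - 2) = a := by omega
          rw [this]
  · positivity

lemma F_summable (a b : ℕ) (ha : 2 ≤ a) (hb : 1 ≤ b) (hab : 4 ≤ a + b) :
    Summable (F a b) :=
  Summable.of_nonneg_of_le (F_nonneg a b) (F_le a b ha hb hab) G_summable

lemma P_summable (a b : ℕ) (ha : 2 ≤ a) (hb : 2 ≤ b) :
    Summable (fun p : ℕ × ℕ =>
      (1 : ℝ) / (((p.1 : ℝ) + 1) ^ a * ((p.2 : ℝ) + 1) ^ b)) := by
  have h := Summable.mul_of_nonneg (f := fun n : ℕ => (1 : ℝ) / ((n : ℝ) + 1) ^ a)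
    (g := fun n : ℕ => (1 : ℝ) / ((n : ℝ) + 1) ^ b)
    (zs_summable a ha) (zs_summable b hb) (g_nonneg a) (g_nonneg b)
  refine h.congr fun p => ?_
  rw [div_mul_div_comm, one_mul]

/-- The full product sum. -/
lemma tsum_prod_zeta (a b : ℕ) (ha : 2 ≤ a) (hb : 2 ≤ b) :
    ∑' p : ℕ × ℕ, (1 : ℝ) / (((p.1 : ℝ) + 1) ^ a * ((p.2 : ℝ) + 1) ^ b)
      = zs a * zs b := by
  have hsb := zs_summable b hb
  have hP := Summable.mul_of_nonneg (f := fun n : ℕ => (1 : ℝ) / ((n : ℝ) + 1) ^ a)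
    (g := fun n : ℕ => (1 : ℝ) / ((n : ℝ) + 1) ^ b)
    (zs_summable a ha) hsb (g_nonneg a) (g_nonneg b)
  calc ∑' p : ℕ × ℕ, (1 : ℝ) / (((p.1 : ℝ) + 1) ^ a * ((p.2 : ℝ) + 1) ^ b)
      = ∑' p : ℕ × ℕ,
          ((1 : ℝ) / ((p.1 : ℝ) + 1) ^ a) * ((1 : ℝ) / ((p.2 : ℝ) + 1) ^ b) :=
        tsum_congr fun p => by rw [div_mul_div_comm, one_mul]
    _ = ∑' m : ℕ, ∑' n : ℕ,
          ((1 : ℝ) / ((m : ℝ) + 1) ^ a) * ((1 : ℝ) / ((n : ℝ) + 1) ^ b) :=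
        Summable.tsum_prod' hP fun m => Summable.mul_left ((1 : ℝ) / ((m : ℝ) + 1) ^ a) hsb
    _ = ∑' m : ℕ, ((1 : ℝ) / ((m : ℝ) + 1) ^ a) * zs b :=
        tsum_congr fun m => tsum_mul_left
    _ = zs a * zs b := tsum_mul_right

/-- Stuffle relation. -/
lemma stuffle (a b : ℕ) (ha : 2 ≤ a) (hb : 2 ≤ b) :
    zs a * zs b = Z2 a b + Z2 b a + zs (a + b) := by
  set P : ℕ × ℕ → ℝ :=
    fun p => (1 : ℝ) / (((p.1 : ℝ) + 1) ^ a * ((p.2 : ℝ) + 1) ^ b) with hP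
  have hPs : Summable P := P_summable a b ha hb
  have hPnn : ∀ p, 0 ≤ P p := fun p => by positivity
  set Flt : ℕ × ℕ → ℝ := fun p => if p.1 < p.2 then P p else 0 with hFlt
  set Fd : ℕ × ℕ → ℝ := fun p => if p.1 = p.2 then P p else 0 with hFd
  have hdecomp : ∀ p, P p = F a b p + Flt p + Fd p := by
    intro p
    simp only [hFlt, hFd, F, hP]
    rcases lt_trichotomy p.1 p.2 with h | h | h
    · rw [if_neg (by omega), if_pos h, if_neg (by omega)]; ring
    · rw [if_neg (by omega), if_neg (by omega), if_pos h]; ring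
    · rw [if_pos h, if_neg (by omega), if_neg (by omega)]; ring
  have hs1 : Summable (F a b) := F_summable a b ha (by omega) (by omega)
  have hs2 : Summable Flt := by
    apply Summable.of_nonneg_of_le _ _ hPs
    · intro p; simp only [hFlt]; split
      · exact hPnn p
      · exact le_rfl
    · intro p; simp only [hFlt]; split
      · exact le_rfl
      · exact hPnn p
  have hs3 : Summable Fd := by
    apply Summable.of_nonneg_of_le _ _ hPs
    · intro p; simp only [hFd]; split
      · exact hPnn p
      · exact le_rfl
    · intro p; simp only [hFd]; split
      · exact le_rfl
      · exact hPnn p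
  have hlt : ∑' p, Flt p = Z2 b a := by
    unfold Z2
    rw [← (Equiv.prodComm ℕ ℕ).tsum_eq Flt]
    apply tsum_congr
    intro p
    simp only [hFlt, hP, Equiv.prodComm_apply, Prod.fst_swap, Prod.snd_swap, F]
    by_cases h : p.2 < p.1
    · rw [if_pos h, if_pos h, mul_comm]
    · rw [if_neg h, if_neg h]
  have hd : ∑' p, Fd p = zs (a + b) := by
    have hinj : Function.Injective (fun n : ℕ => ((n, n) : ℕ × ℕ)) := by
      intro x y h; simpa using congrArg Prod.fst h
    have hsupp : Function.support Fd ⊆ Set.range (fun n : ℕ => ((n, n) : ℕ × ℕ)) := by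
      intro p hp
      simp only [Function.mem_support, hFd] at hp
      by_cases h : p.1 = p.2
      · exact ⟨p.1, by rw [Prod.ext_iff]; exact ⟨rfl, h⟩⟩
      · exact absurd (if_neg h) hp
    rw [← hinj.tsum_eq hsupp]
    unfold zs
    apply tsum_congr
    intro n
    simp only [hFd, hP, if_pos rfl, pow_add]
  have hsum : ∑' p, P p = Z2 a b + Z2 b a + zs (a + b) := by
    calc ∑' p, P p = ∑' p, (F a b p + Flt p + Fd p) := tsum_congr hdecomp
      _ = (∑' p, F a b p) + (∑' p, Flt p) + (∑' p, Fd p) := by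
          rw [Summable.tsum_add (hs1.add hs2) hs3, Summable.tsum_add hs1 hs2]
      _ = Z2 a b + Z2 b a + zs (a + b) := by rw [hlt, hd]; rfl
  rw [← tsum_prod_zeta a b ha hb]
  exact hsum

/-- The shifted-substitution injection. -/
def ii : ℕ × ℕ → ℕ × ℕ := fun p => (p.1 + p.2 + 1, p.1)

lemma ii_inj : Function.Injective ii := by
  intro p q h
  simp only [ii, Prod.mk.injEq] at h
  obtain ⟨h1, h2⟩ := h
  rw [Prod.ext_iff]
  exact ⟨h2, by omega⟩

lemma ii_range (a b : ℕ) : Function.support (F a b) ⊆ Set.range ii := by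
  intro p hp
  simp only [Function.mem_support, F] at hp
  by_cases h : p.2 < p.1
  · refine ⟨(p.2, p.1 - p.2 - 1), ?_⟩
    rw [Prod.ext_iff]
    refine ⟨?_, rfl⟩
    show p.2 + (p.1 - p.2 - 1) + 1 = p.1
    omega
  · exact absurd (if_neg h) hp

lemma F_comp_ii (a b : ℕ) (p : ℕ × ℕ) :
    F a b (ii p) = (1 : ℝ) / (((p.1 : ℝ) + (p.2 : ℝ) + 2) ^ a * ((p.1 : ℝ) + 1) ^ b) := by
  have h : (ii p).2 < (ii p).1 := by
    change p.1 < p.1 + p.2 + 1; omega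
  unfold F
  rw [if_pos h]
  show (1 : ℝ) / ((((p.1 + p.2 + 1 : ℕ) : ℝ) + 1) ^ a * (((p.1 : ℕ) : ℝ) + 1) ^ b) = _
  push_cast
  ring_nf

/-- Shuffle term: ∑_{x,y≥0} 1/((x+y+2)^a (x+1)^b) = ζ(a,b). -/
lemma shuffle_term (a b : ℕ) :
    ∑' p : ℕ × ℕ, (1 : ℝ) / (((p.1 : ℝ) + (p.2 : ℝ) + 2) ^ a * ((p.1 : ℝ) + 1) ^ b)
      = Z2 a b := by
  unfold Z2
  rw [← ii_inj.tsum_eq (ii_range a b)]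
  exact tsum_congr fun p => (F_comp_ii a b p).symm

lemma shuffle_term_summable (a b : ℕ) (ha : 2 ≤ a) (hb : 1 ≤ b) (hab : 4 ≤ a + b) :
    Summable (fun p : ℕ × ℕ =>
      (1 : ℝ) / (((p.1 : ℝ) + (p.2 : ℝ) + 2) ^ a * ((p.1 : ℝ) + 1) ^ b)) := by
  have h := (ii_inj.summable_iff (f := F a b)
    (fun x hx => by
      by_contra hne
      exact hx (ii_range a b hne))).mpr (F_summable a b ha hb hab)
  exact h.congr fun p => F_comp_ii a b p

lemma swap_term (a b : ℕ) :
    ∑' p : ℕ × ℕ, (1 : ℝ) / (((p.1 : ℝ) + (p.2 : ℝ) + 2) ^ a * ((p.2 : ℝ) + 1) ^ b)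
      = Z2 a b := by
  rw [← shuffle_term a b,
    ← (Equiv.prodComm ℕ ℕ).tsum_eq (fun p : ℕ × ℕ =>
      (1 : ℝ) / (((p.1 : ℝ) + (p.2 : ℝ) + 2) ^ a * ((p.1 : ℝ) + 1) ^ b))]
  apply tsum_congr
  intro p
  simp only [Equiv.prodComm_apply, Prod.fst_swap, Prod.snd_swap]
  ring_nf

lemma swap_term_summable (a b : ℕ) (ha : 2 ≤ a) (hb : 1 ≤ b) (hab : 4 ≤ a + b) :
    Summable (fun p : ℕ × ℕ =>
      (1 : ℝ) / (((p.1 : ℝ) + (p.2 : ℝ) + 2) ^ a * ((p.2 : ℝ) + 1) ^ b)) := by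
  have h2 := ((Equiv.prodComm ℕ ℕ).summable_iff (f := fun p : ℕ × ℕ =>
      (1 : ℝ) / (((p.1 : ℝ) + (p.2 : ℝ) + 2) ^ a * ((p.1 : ℝ) + 1) ^ b))).mpr
    (shuffle_term_summable a b ha hb hab)
  refine h2.congr fun p => ?_
  simp only [comp_apply, Equiv.prodComm_apply, Prod.fst_swap, Prod.snd_swap]
  ring_nf


lemma pf33 (x y : ℝ) (hx0 : x ≠ 0) (hy0 : y ≠ 0) (hs0 : x + y ≠ 0) :
    (1 : ℝ) / (x ^ 3 * y ^ 3)
      = 1 / ((x + y) ^ 3 * x ^ 3) + 3 * (1 / ((x + y) ^ 4 * x ^ 2))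
      + 6 * (1 / ((x + y) ^ 5 * x ^ 1))
      + 1 / ((x + y) ^ 3 * y ^ 3) + 3 * (1 / ((x + y) ^ 4 * y ^ 2))
      + 6 * (1 / ((x + y) ^ 5 * y ^ 1)) := by
  field_simp
  ring

lemma pf24 (x y : ℝ) (hx0 : x ≠ 0) (hy0 : y ≠ 0) (hs0 : x + y ≠ 0) :
    (1 : ℝ) / (x ^ 2 * y ^ 4)
      = 1 / ((x + y) ^ 4 * x ^ 2) + 4 * (1 / ((x + y) ^ 5 * x ^ 1))
      + 1 / ((x + y) ^ 2 * y ^ 4) + 2 * (1 / ((x + y) ^ 3 * y ^ 3))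
      + 3 * (1 / ((x + y) ^ 4 * y ^ 2)) + 4 * (1 / ((x + y) ^ 5 * y ^ 1)) := by
  field_simp
  ring

lemma tsum_add6 {f1 f2 f3 f4 f5 f6 : ℕ × ℕ → ℝ} (h1 : Summable f1) (h2 : Summable f2)
    (h3 : Summable f3) (h4 : Summable f4) (h5 : Summable f5) (h6 : Summable f6) :
    ∑' p, (f1 p + f2 p + f3 p + f4 p + f5 p + f6 p)
      = (∑' p, f1 p) + (∑' p, f2 p) + (∑' p, f3 p) + (∑' p, f4 p)
        + (∑' p, f5 p) + (∑' p, f6 p) := by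
  rw [Summable.tsum_add ((((h1.add h2).add h3).add h4).add h5) h6,
      Summable.tsum_add (((h1.add h2).add h3).add h4) h5,
      Summable.tsum_add ((h1.add h2).add h3) h4,
      Summable.tsum_add (h1.add h2) h3,
      Summable.tsum_add h1 h2]

/-- Shuffle relation for ζ(3)². -/
lemma shuffle33 : zs 3 * zs 3 = 2 * Z2 3 3 + 6 * Z2 4 2 + 12 * Z2 5 1 := by
  rw [← tsum_prod_zeta 3 3 (by norm_num) (by norm_num)]
  have key : ∀ p : ℕ × ℕ,
      (1 : ℝ) / (((p.1 : ℝ) + 1) ^ 3 * ((p.2 : ℝ) + 1) ^ 3)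
      = (1 : ℝ) / (((p.1 : ℝ) + (p.2 : ℝ) + 2) ^ 3 * ((p.1 : ℝ) + 1) ^ 3)
      + 3 * ((1 : ℝ) / (((p.1 : ℝ) + (p.2 : ℝ) + 2) ^ 4 * ((p.1 : ℝ) + 1) ^ 2))
      + 6 * ((1 : ℝ) / (((p.1 : ℝ) + (p.2 : ℝ) + 2) ^ 5 * ((p.1 : ℝ) + 1) ^ 1))
      + (1 : ℝ) / (((p.1 : ℝ) + (p.2 : ℝ) + 2) ^ 3 * ((p.2 : ℝ) + 1) ^ 3)
      + 3 * ((1 : ℝ) / (((p.1 : ℝ) + (p.2 : ℝ) + 2) ^ 4 * ((p.2 : ℝ) + 1) ^ 2))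
      + 6 * ((1 : ℝ) / (((p.1 : ℝ) + (p.2 : ℝ) + 2) ^ 5 * ((p.2 : ℝ) + 1) ^ 1)) := by
    intro p
    have hxy : (p.1 : ℝ) + (p.2 : ℝ) + 2 = ((p.1 : ℝ) + 1) + ((p.2 : ℝ) + 1) := by ring
    rw [hxy]
    exact pf33 _ _ (by positivity) (by positivity) (by positivity)
  rw [tsum_congr key]
  have s1 := shuffle_term_summable 3 3 (by norm_num) (by norm_num) (by norm_num)
  have s2 := shuffle_term_summable 4 2 (by norm_num) (by norm_num) (by norm_num)
  have s3 := shuffle_term_summable 5 1 (by norm_num) (by norm_num) (by norm_num)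
  have t1 := swap_term_summable 3 3 (by norm_num) (by norm_num) (by norm_num)
  have t2 := swap_term_summable 4 2 (by norm_num) (by norm_num) (by norm_num)
  have t3 := swap_term_summable 5 1 (by norm_num) (by norm_num) (by norm_num)
  rw [tsum_add6 s1 (s2.mul_left 3) (s3.mul_left 6) t1 (t2.mul_left 3) (t3.mul_left 6),
      tsum_mul_left, tsum_mul_left, tsum_mul_left, tsum_mul_left,
      shuffle_term, shuffle_term, shuffle_term, swap_term, swap_term, swap_term]
  ring

/-- Shuffle relation for ζ(2)ζ(4). -/
lemma shuffle24 : zs 2 * zs 4 =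
    Z2 4 2 + 4 * Z2 5 1 + Z2 2 4 + 2 * Z2 3 3 + 3 * Z2 4 2 + 4 * Z2 5 1 := by
  rw [← tsum_prod_zeta 2 4 (by norm_num) (by norm_num)]
  have key : ∀ p : ℕ × ℕ,
      (1 : ℝ) / (((p.1 : ℝ) + 1) ^ 2 * ((p.2 : ℝ) + 1) ^ 4)
      = (1 : ℝ) / (((p.1 : ℝ) + (p.2 : ℝ) + 2) ^ 4 * ((p.1 : ℝ) + 1) ^ 2)
      + 4 * ((1 : ℝ) / (((p.1 : ℝ) + (p.2 : ℝ) + 2) ^ 5 * ((p.1 : ℝ) + 1) ^ 1))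
      + (1 : ℝ) / (((p.1 : ℝ) + (p.2 : ℝ) + 2) ^ 2 * ((p.2 : ℝ) + 1) ^ 4)
      + 2 * ((1 : ℝ) / (((p.1 : ℝ) + (p.2 : ℝ) + 2) ^ 3 * ((p.2 : ℝ) + 1) ^ 3))
      + 3 * ((1 : ℝ) / (((p.1 : ℝ) + (p.2 : ℝ) + 2) ^ 4 * ((p.2 : ℝ) + 1) ^ 2))
      + 4 * ((1 : ℝ) / (((p.1 : ℝ) + (p.2 : ℝ) + 2) ^ 5 * ((p.2 : ℝ) + 1) ^ 1)) := by
    intro p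
    have hxy : (p.1 : ℝ) + (p.2 : ℝ) + 2 = ((p.1 : ℝ) + 1) + ((p.2 : ℝ) + 1) := by ring
    rw [hxy]
    exact pf24 _ _ (by positivity) (by positivity) (by positivity)
  rw [tsum_congr key]
  have s1 := shuffle_term_summable 4 2 (by norm_num) (by norm_num) (by norm_num)
  have s2 := shuffle_term_summable 5 1 (by norm_num) (by norm_num) (by norm_num)
  have t1 := swap_term_summable 2 4 (by norm_num) (by norm_num) (by norm_num)
  have t2 := swap_term_summable 3 3 (by norm_num) (by norm_num) (by norm_num)
  have t3 := swap_term_summable 4 2 (by norm_num) (by norm_num) (by norm_num)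
  have t4 := swap_term_summable 5 1 (by norm_num) (by norm_num) (by norm_num)
  rw [tsum_add6 s1 (s2.mul_left 4) t1 (t2.mul_left 2) (t3.mul_left 3) (t4.mul_left 4),
      tsum_mul_left, tsum_mul_left, tsum_mul_left, tsum_mul_left,
      shuffle_term, shuffle_term, swap_term, swap_term, swap_term, swap_term]

/-- ζ(5,1) = (3/4)ζ(6) − (1/2)ζ(3)². -/
theorem zeta51_eval :
    (∑' p : ℕ × ℕ, if 1 ≤ p.2 ∧ p.2 < p.1 then (1 : ℝ) / ((p.1 : ℝ) ^ 5 * p.2) else 0)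
      = 3 / 4 * (∑' n : ℕ, (1 : ℝ) / ((n : ℝ) + 1) ^ 6)
        - 1 / 2 * (∑' n : ℕ, (1 : ℝ) / ((n : ℝ) + 1) ^ 3) ^ 2 := by
  have hstatement :
      (∑' p : ℕ × ℕ, if 1 ≤ p.2 ∧ p.2 < p.1 then (1 : ℝ) / ((p.1 : ℝ) ^ 5 * p.2) else 0)
        = Z2 5 1 := by
    set S : ℕ × ℕ → ℝ :=
      fun q => if 1 ≤ q.2 ∧ q.2 < q.1 then (1 : ℝ) / ((q.1 : ℝ) ^ 5 * q.2) else 0 with hS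
    have hinj : Function.Injective (fun p : ℕ × ℕ => ((p.1 + 1, p.2 + 1) : ℕ × ℕ)) := by
      intro p q h
      simp only [Prod.mk.injEq] at h
      rw [Prod.ext_iff]
      omega
    have hsupp : Function.support S ⊆
        Set.range (fun p : ℕ × ℕ => ((p.1 + 1, p.2 + 1) : ℕ × ℕ)) := by
      intro q hq
      simp only [Function.mem_support, hS] at hq
      by_cases h : 1 ≤ q.2 ∧ q.2 < q.1
      · refine ⟨(q.1 - 1, q.2 - 1), ?_⟩
        rw [Prod.ext_iff]
        constructor
        · show q.1 - 1 + 1 = q.1; omega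
        · show q.2 - 1 + 1 = q.2; omega
      · exact absurd (if_neg h) hq
    rw [← hinj.tsum_eq hsupp]
    unfold Z2
    apply tsum_congr
    intro p
    simp only [hS, F]
    have hc1 : (1 ≤ ((p.1 + 1, p.2 + 1) : ℕ × ℕ).2 ∧ ((p.1 + 1, p.2 + 1) : ℕ × ℕ).2
        < ((p.1 + 1, p.2 + 1) : ℕ × ℕ).1) ↔ p.2 < p.1 := by
      change 1 ≤ p.2 + 1 ∧ p.2 + 1 < p.1 + 1 ↔ _
      omega
    by_cases h : p.2 < p.1
    · rw [if_pos (hc1.mpr h), if_pos h]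
      show (1 : ℝ) / ((((p.1 + 1 : ℕ) : ℝ)) ^ 5 * ((p.2 + 1 : ℕ) : ℝ)) = _
      push_cast
      rw [pow_one]
    · rw [if_neg (by rw [hc1]; exact h), if_neg h]
  have e1 := stuffle 3 3 (by norm_num) (by norm_num)
  have e2 := stuffle 2 4 (by norm_num) (by norm_num)
  have e3 := shuffle33
  have e4 := shuffle24
  have hz6a : zs (3 + 3) = zs 6 := by norm_num
  have hz6b : zs (2 + 4) = zs 6 := by norm_num
  rw [hz6a] at e1
  rw [hz6b] at e2
  have hZ : Z2 5 1 = 3 / 4 * zs 6 - 1 / 2 * (zs 3) ^ 2 := by linarith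
  rw [hstatement, hZ]
  rfl
end

section
/- The triple zeta value ζ(2,2,2) = ∑_{m>n>p≥1} 1/(m² n² p²) equals (3/16)ζ(6) = π⁶/5040. -/
open Real

private lemma bern5 : bernoulli' 5 = 0 := by
  have h : Nat.choose 5 2 = 10 := by decide
  rw [bernoulli'_def]
  norm_num [Finset.sum_range_succ, h]

private lemma bern6 : bernoulli' 6 = 1/42 := by
  have h : Nat.choose 6 2 = 15 := by decide
  have h2 : Nat.choose 6 4 = 15 := by decide
  rw [bernoulli'_def]
  norm_num [Finset.sum_range_succ, h, h2, bern5]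

private lemma hs6 : HasSum (fun n : ℕ => (1:ℝ)/(n:ℝ)^6) (π^6/945) := by
  convert hasSum_zeta_nat three_ne_zero using 1
  rw [bernoulli_eq_bernoulli'_of_ne_one (by norm_num), bern6]
  norm_num [Nat.factorial]
  ring

noncomputable def aa : ℕ → ℝ := fun n => 1 / (n:ℝ)^2

lemma aa_nonneg (n : ℕ) : 0 ≤ aa n := by unfold aa; positivity

lemma haa : HasSum aa (π^2/6) := hasSum_zeta_two

lemma haa4 : HasSum (fun n => aa n * aa n) (π^4/90) := by
  have h : (fun n => aa n * aa n) = fun n : ℕ => (1:ℝ)/(n:ℝ)^4 := by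
    funext n; simp only [aa, div_mul_div_comm, one_mul]; norm_num; ring
  rw [h]; exact hasSum_zeta_four

lemma haa6 : HasSum (fun n => aa n * aa n * aa n) (π^6/945) := by
  have h : (fun n => aa n * aa n * aa n) = fun n : ℕ => (1:ℝ)/(n:ℝ)^6 := by
    funext n; simp only [aa, div_mul_div_comm, one_mul]; norm_num; ring
  rw [h]; exact hs6

noncomputable def ff : ℕ×ℕ×ℕ → ℝ := fun t => aa t.1 * aa t.2.1 * aa t.2.2

noncomputable def FF : ℕ×ℕ×ℕ → ℝ := fun t => if t.2.2 < t.2.1 ∧ t.2.1 < t.1 then ff t else 0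

def e2 : ℕ×ℕ×ℕ ≃ ℕ×ℕ×ℕ :=
  ⟨fun t => (t.1, t.2.2, t.2.1), fun t => (t.1, t.2.2, t.2.1), fun t => rfl, fun t => rfl⟩
def e3 : ℕ×ℕ×ℕ ≃ ℕ×ℕ×ℕ :=
  ⟨fun t => (t.2.1, t.1, t.2.2), fun t => (t.2.1, t.1, t.2.2), fun t => rfl, fun t => rfl⟩
def e4 : ℕ×ℕ×ℕ ≃ ℕ×ℕ×ℕ :=
  ⟨fun t => (t.2.1, t.2.2, t.1), fun t => (t.2.2, t.1, t.2.1), fun t => rfl, fun t => rfl⟩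
def e5 : ℕ×ℕ×ℕ ≃ ℕ×ℕ×ℕ :=
  ⟨fun t => (t.2.2, t.1, t.2.1), fun t => (t.2.1, t.2.2, t.1), fun t => rfl, fun t => rfl⟩
def e6 : ℕ×ℕ×ℕ ≃ ℕ×ℕ×ℕ :=
  ⟨fun t => (t.2.2, t.2.1, t.1), fun t => (t.2.2, t.2.1, t.1), fun t => rfl, fun t => rfl⟩

noncomputable def GG1 : ℕ×ℕ×ℕ → ℝ := fun t => if t.1 = t.2.1 ∧ t.1 ≠ t.2.2 then ff t else 0
noncomputable def GG2 : ℕ×ℕ×ℕ → ℝ := fun t => if t.1 = t.2.2 ∧ t.1 ≠ t.2.1 then ff t else 0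
noncomputable def GG3 : ℕ×ℕ×ℕ → ℝ := fun t => if t.2.1 = t.2.2 ∧ t.2.1 ≠ t.1 then ff t else 0
noncomputable def HH : ℕ×ℕ×ℕ → ℝ := fun t => if t.1 = t.2.1 ∧ t.2.1 = t.2.2 then ff t else 0

set_option maxHeartbeats 4000000 in
lemma decomp (t : ℕ×ℕ×ℕ) : ff t =
    FF t + FF (e2 t) + FF (e3 t) + FF (e4 t) + FF (e5 t) + FF (e6 t) +
    GG1 t + GG2 t + GG3 t + HH t := by
  obtain ⟨x, y, z⟩ := t
  dsimp only [FF, GG1, GG2, GG3, HH, ff, e2, e3, e4, e5, e6, Equiv.coe_fn_mk]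
  split_ifs <;> first | ring1 | (exfalso; omega)

lemma ff_nonneg (t : ℕ×ℕ×ℕ) : 0 ≤ ff t :=
  mul_nonneg (mul_nonneg (aa_nonneg _) (aa_nonneg _)) (aa_nonneg _)

set_option maxHeartbeats 1000000 in
lemma hff : HasSum ff ((π^2/6) * ((π^2/6) * (π^2/6))) := by
  have hpair : HasSum (fun p : ℕ×ℕ => aa p.1 * aa p.2) ((π^2/6) * (π^2/6)) :=
    haa.mul haa (Summable.mul_of_nonneg haa.summable haa.summable aa_nonneg aa_nonneg)
  have h := haa.mul hpair (Summable.mul_of_nonneg haa.summable hpair.summable aa_nonneg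
    (fun p => mul_nonneg (aa_nonneg _) (aa_nonneg _)))
  have he : ff = fun t : ℕ×ℕ×ℕ => aa t.1 * (aa t.2.1 * aa t.2.2) := by
    funext t; simp [ff, mul_assoc]
  rw [he]; exact h

lemma hFF_summable : Summable FF :=
  Summable.of_nonneg_of_le
    (fun t => by unfold FF; split_ifs; exacts [ff_nonneg t, le_refl 0])
    (fun t => by unfold FF; split_ifs; exacts [le_refl _, ff_nonneg t])
    hff.summable

lemma hdiag2 : HasSum (fun p : ℕ×ℕ => if p.1 = p.2 then aa p.1 * aa p.1 * aa p.2 else 0)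
    (π^6/945) := by
  have hinj : Function.Injective (fun n : ℕ => ((n, n) : ℕ×ℕ)) := by
    intro a b h; simpa using h
  refine (hinj.hasSum_iff ?_).mp ?_
  · intro p hp
    have : p.1 ≠ p.2 := by
      rintro h
      exact hp ⟨p.1, Prod.ext rfl h⟩
    simp [this]
  · have he : ((fun p : ℕ×ℕ => if p.1 = p.2 then aa p.1 * aa p.1 * aa p.2 else 0) ∘
        (fun n : ℕ => ((n, n) : ℕ×ℕ))) = fun n => aa n * aa n * aa n := by
      funext n; simp
    rw [he]; exact haa6

set_option maxHeartbeats 1000000 in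
lemma hfull2 : HasSum (fun p : ℕ×ℕ => aa p.1 * aa p.1 * aa p.2) ((π^4/90) * (π^2/6)) := by
  have h := haa4.mul haa (Summable.mul_of_nonneg haa4.summable haa.summable
    (fun n => mul_nonneg (aa_nonneg n) (aa_nonneg n)) aa_nonneg)
  exact h

lemma hoff2 : HasSum (fun p : ℕ×ℕ => if p.1 ≠ p.2 then aa p.1 * aa p.1 * aa p.2 else 0)
    ((π^4/90) * (π^2/6) - π^6/945) := by
  have he : (fun p : ℕ×ℕ => if p.1 ≠ p.2 then aa p.1 * aa p.1 * aa p.2 else 0) =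
      fun p : ℕ×ℕ => aa p.1 * aa p.1 * aa p.2 -
        (if p.1 = p.2 then aa p.1 * aa p.1 * aa p.2 else 0) := by
    funext p; by_cases h : p.1 = p.2 <;> simp [h]
  rw [he]; exact hfull2.sub hdiag2

lemma prodmk_inj1 : Function.Injective (fun p : ℕ×ℕ => ((p.1, p.1, p.2) : ℕ×ℕ×ℕ)) := by
  intro p q h
  simp only [Prod.mk.injEq] at h
  exact Prod.ext h.1 h.2.2

lemma hGG1 : HasSum GG1 ((π^4/90) * (π^2/6) - π^6/945) := by
  refine (prodmk_inj1.hasSum_iff ?_).mp ?_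
  · rintro ⟨x, y, z⟩ ht
    have : x ≠ y := by
      rintro rfl
      exact ht ⟨(x, z), rfl⟩
    simp [GG1, this]
  · have he : (GG1 ∘ fun p : ℕ×ℕ => ((p.1, p.1, p.2) : ℕ×ℕ×ℕ)) =
        fun p : ℕ×ℕ => if p.1 ≠ p.2 then aa p.1 * aa p.1 * aa p.2 else 0 := by
      funext p
      by_cases h : p.1 = p.2 <;> simp [GG1, ff, h]
    rw [he]; exact hoff2

lemma prodmk_inj2 : Function.Injective (fun p : ℕ×ℕ => ((p.1, p.2, p.1) : ℕ×ℕ×ℕ)) := by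
  intro p q h
  simp only [Prod.mk.injEq] at h
  exact Prod.ext h.1 h.2.1

lemma hGG2 : HasSum GG2 ((π^4/90) * (π^2/6) - π^6/945) := by
  refine (prodmk_inj2.hasSum_iff ?_).mp ?_
  · rintro ⟨x, y, z⟩ ht
    have : x ≠ z := by
      rintro rfl
      exact ht ⟨(x, y), rfl⟩
    simp [GG2, this]
  · have he : (GG2 ∘ fun p : ℕ×ℕ => ((p.1, p.2, p.1) : ℕ×ℕ×ℕ)) =
        fun p : ℕ×ℕ => if p.1 ≠ p.2 then aa p.1 * aa p.1 * aa p.2 else 0 := by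
      funext p
      by_cases h : p.1 = p.2 <;> simp [GG2, ff, h] <;> ring
    rw [he]; exact hoff2

lemma prodmk_inj3 : Function.Injective (fun p : ℕ×ℕ => ((p.2, p.1, p.1) : ℕ×ℕ×ℕ)) := by
  intro p q h
  simp only [Prod.mk.injEq] at h
  exact Prod.ext h.2.1 h.1

lemma hGG3 : HasSum GG3 ((π^4/90) * (π^2/6) - π^6/945) := by
  refine (prodmk_inj3.hasSum_iff ?_).mp ?_
  · rintro ⟨x, y, z⟩ ht
    have : y ≠ z := by
      rintro rfl
      exact ht ⟨(y, x), rfl⟩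
    simp [GG3, this]
  · have he : (GG3 ∘ fun p : ℕ×ℕ => ((p.2, p.1, p.1) : ℕ×ℕ×ℕ)) =
        fun p : ℕ×ℕ => if p.1 ≠ p.2 then aa p.1 * aa p.1 * aa p.2 else 0 := by
      funext p
      by_cases h : p.1 = p.2 <;> simp [GG3, ff, h] <;> ring
    rw [he]; exact hoff2

lemma hHH : HasSum HH (π^6/945) := by
  have hinj : Function.Injective (fun n : ℕ => ((n, n, n) : ℕ×ℕ×ℕ)) := by
    intro a b h; simpa using h
  refine (hinj.hasSum_iff ?_).mp ?_
  · rintro ⟨x, y, z⟩ ht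
    have : ¬(x = y ∧ y = z) := by
      rintro ⟨rfl, rfl⟩
      exact ht ⟨x, rfl⟩
    simp [HH, this]
  · have he : (HH ∘ fun n : ℕ => ((n, n, n) : ℕ×ℕ×ℕ)) = fun n => aa n * aa n * aa n := by
      funext n; simp [HH, ff]
    rw [he]; exact haa6

set_option maxHeartbeats 1000000 in
lemma key : ∑' t : ℕ×ℕ×ℕ, FF t = π^6/5040 := by
  have hFS : HasSum FF (∑' t : ℕ×ℕ×ℕ, FF t) := hFF_summable.hasSum
  set S := ∑' t : ℕ×ℕ×ℕ, FF t with hSdef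
  have h2 : HasSum (fun t => FF (e2 t)) S := (e2.hasSum_iff (f := FF)).mpr hFS
  have h3 : HasSum (fun t => FF (e3 t)) S := (e3.hasSum_iff (f := FF)).mpr hFS
  have h4 : HasSum (fun t => FF (e4 t)) S := (e4.hasSum_iff (f := FF)).mpr hFS
  have h5 : HasSum (fun t => FF (e5 t)) S := (e5.hasSum_iff (f := FF)).mpr hFS
  have h6 : HasSum (fun t => FF (e6 t)) S := (e6.hasSum_iff (f := FF)).mpr hFS
  have htot : HasSum (fun t => FF t + FF (e2 t) + FF (e3 t) + FF (e4 t) + FF (e5 t) +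
      FF (e6 t) + GG1 t + GG2 t + GG3 t + HH t)
      (S + S + S + S + S + S + ((π^4/90) * (π^2/6) - π^6/945) +
        ((π^4/90) * (π^2/6) - π^6/945) + ((π^4/90) * (π^2/6) - π^6/945) + π^6/945) :=
    ((((((((hFS.add h2).add h3).add h4).add h5).add h6).add hGG1).add hGG2).add hGG3).add hHH
  have hfe : ff = fun t => FF t + FF (e2 t) + FF (e3 t) + FF (e4 t) + FF (e5 t) +
      FF (e6 t) + GG1 t + GG2 t + GG3 t + HH t := funext decomp
  have hf2 := hff
  rw [hfe] at hf2
  have hkey := hf2.unique htot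
  ring_nf at hkey ⊢
  linarith [hkey]

/-- ζ(2,2,2) = (3/16)ζ(6) = π⁶/5040. -/
theorem zeta222_eval :
    (∑' t : ℕ × ℕ × ℕ,
        if 1 ≤ t.2.2 ∧ t.2.2 < t.2.1 ∧ t.2.1 < t.1 then
          (1 : ℝ) / ((t.1 : ℝ) ^ 2 * (t.2.1 : ℝ) ^ 2 * (t.2.2 : ℝ) ^ 2) else 0)
      = π ^ 6 / 5040 := by
  have hpt : ∀ t : ℕ×ℕ×ℕ, (if 1 ≤ t.2.2 ∧ t.2.2 < t.2.1 ∧ t.2.1 < t.1 then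
      (1 : ℝ) / ((t.1 : ℝ) ^ 2 * (t.2.1 : ℝ) ^ 2 * (t.2.2 : ℝ) ^ 2) else 0) = FF t := by
    rintro ⟨x, y, z⟩
    simp only [FF, ff, aa]
    rcases Nat.eq_zero_or_pos z with hz | hz
    · subst hz
      split_ifs <;> simp_all
    · have hiff : (1 ≤ z ∧ z < y ∧ y < x) ↔ (z < y ∧ y < x) := by omega
      exact if_congr hiff (by rw [div_mul_div_comm, div_mul_div_comm, one_mul, one_mul]) rfl
  rw [tsum_congr hpt, key]
end

section
/- For every n ≥ 1, the multiple zeta value ζ({2}ⁿ) = ∑_{m_1>m_2>...>m_n≥1} ∏_{i=1}^n 1/m_i² equals π^{2n}/(2n+1)!. -/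
open Real Filter Finset Topology
open scoped NNReal ENNReal

namespace ZetaTwoAux

noncomputable def aseq (k : ℕ) : ℝ := 1 / ((k : ℝ) + 1) ^ 2

lemma aseq_pos (k : ℕ) : 0 < aseq k := by unfold aseq; positivity

lemma aseq_summable : Summable aseq := by
  have h : Summable (fun n : ℕ => 1 / (n : ℝ) ^ 2) :=
    Real.summable_one_div_nat_pow.2 one_lt_two
  have := (summable_nat_add_iff 1).2 h
  apply this.congr
  intro k
  simp [aseq]

noncomputable def P (s : Finset ℕ) : ℝ := ∏ k ∈ s, aseq k

lemma P_pos (s : Finset ℕ) : 0 < P s := Finset.prod_pos fun k _ => aseq_pos k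

lemma P_sum_le (u : Finset (Finset ℕ)) : ∑ s ∈ u, P s ≤ Real.exp (∑' k, aseq k) := by
  set N : ℕ := (u.sup fun s => s.sup id) + 1 with hN
  have hu : u ⊆ (Finset.range N).powerset := by
    intro s hs
    rw [Finset.mem_powerset]
    intro k hk
    rw [Finset.mem_range]
    calc k = id k := rfl
    _ ≤ s.sup id := Finset.le_sup hk
    _ ≤ u.sup fun s => s.sup id := Finset.le_sup hs
    _ < N := Nat.lt_succ_self _
  calc ∑ s ∈ u, P s ≤ ∑ s ∈ (Finset.range N).powerset, P s :=
        Finset.sum_le_sum_of_subset_of_nonneg hu (fun s _ _ => (P_pos s).le)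
    _ = ∏ k ∈ Finset.range N, (aseq k + 1) := by
        rw [Finset.prod_add]
        exact Finset.sum_congr rfl fun s _ => by simp [P]
    _ ≤ ∏ k ∈ Finset.range N, Real.exp (aseq k) :=
        Finset.prod_le_prod (fun k _ => by linarith [aseq_pos k]) (fun k _ => Real.add_one_le_exp _)
    _ = Real.exp (∑ k ∈ Finset.range N, aseq k) := (Real.exp_sum _ _).symm
    _ ≤ Real.exp (∑' k, aseq k) := by
        apply Real.exp_le_exp.2
        exact Summable.sum_le_tsum _ (fun k _ => (aseq_pos k).le) aseq_summable

lemma P_summable : Summable P :=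
  summable_of_sum_le (fun s => (P_pos s).le) P_sum_le

noncomputable def eTot : ℝ := ∑' s, P s

noncomputable def e (j : ℕ) : ℝ := ∑' s : {s : Finset ℕ // s.card = j}, P s.1

lemma e_summable (j : ℕ) : Summable (fun s : {s : Finset ℕ // s.card = j} => P s.1) :=
  P_summable.subtype {s | s.card = j}

lemma eTot_nonneg : 0 ≤ eTot := tsum_nonneg fun s => (P_pos s).le

lemma e_nonneg (j : ℕ) : 0 ≤ e j := tsum_nonneg fun s => (P_pos s.1).le

lemma e_le_eTot (j : ℕ) : e j ≤ eTot :=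
  Summable.tsum_le_tsum_of_inj Subtype.val Subtype.val_injective
    (fun s _ => (P_pos s).le) (fun _ => le_refl _) (e_summable j) P_summable

lemma e_zero : e 0 = 1 := by
  rw [e, tsum_eq_single (⟨∅, Finset.card_empty⟩ : {s : Finset ℕ // s.card = 0})]
  · simp [P]
  · rintro ⟨s, hs⟩ hne
    exact absurd (Subtype.ext (Finset.card_eq_zero.1 hs)) hne

noncomputable def EN (j N : ℕ) : ℝ := ∑ s ∈ Finset.powersetCard j (Finset.range N), P s

noncomputable def UN (j N : ℕ) : Finset {s : Finset ℕ // s.card = j} :=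
  (Finset.powersetCard j (Finset.range N)).subtype _

lemma UN_sum (j N : ℕ) : ∑ s ∈ UN j N, P s.1 = EN j N := by
  rw [UN, Finset.sum_subtype_eq_sum_filter, EN]
  congr 1
  apply Finset.filter_true_of_mem
  intro s hs
  exact (Finset.mem_powersetCard.1 hs).2

lemma EN_le (j N : ℕ) : EN j N ≤ e j := by
  rw [← UN_sum]
  exact Summable.sum_le_tsum _ (fun s _ => (P_pos s.1).le) (e_summable j)

lemma EN_nonneg (j N : ℕ) : 0 ≤ EN j N :=
  Finset.sum_nonneg fun s _ => (P_pos s).le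

lemma EN_tendsto (j : ℕ) : Tendsto (fun N => EN j N) atTop (𝓝 (e j)) := by
  have h1 : Tendsto (fun N => UN j N) atTop atTop := by
    apply Filter.tendsto_atTop_finset_of_monotone
    · intro N M hNM
      exact Finset.subtype_mono (Finset.powersetCard_mono (Finset.range_subset_range.2 hNM))
    · rintro ⟨s, hs⟩
      refine ⟨(s.sup id) + 1, ?_⟩
      rw [UN, Finset.mem_subtype]
      rw [Finset.mem_powersetCard]
      refine ⟨fun k hk => Finset.mem_range.2 ?_, hs⟩
      exact Nat.lt_succ_of_le (Finset.le_sup (f := id) hk)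
  have h2 := (e_summable j).hasSum.comp h1
  simpa only [Function.comp_def, UN_sum, e] using h2


lemma prod_expand (t : ℝ) (N : ℕ) :
    ∏ k ∈ Finset.range N, (1 + t * aseq k) = ∑ j ∈ Finset.range (N + 1), t ^ j * EN j N := by
  have h1 : ∏ k ∈ Finset.range N, (t * aseq k + 1) =
      ∑ s ∈ (Finset.range N).powerset, (∏ k ∈ s, (t * aseq k)) * ∏ k ∈ (Finset.range N) \ s, 1 :=
    Finset.prod_add _ _ _
  have h2 : ∀ s : Finset ℕ, (∏ k ∈ s, (t * aseq k)) = t ^ s.card * P s := by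
    intro s
    rw [Finset.prod_mul_distrib, Finset.prod_const, P]
  calc ∏ k ∈ Finset.range N, (1 + t * aseq k)
      = ∑ s ∈ (Finset.range N).powerset, t ^ s.card * P s := by
        rw [Finset.prod_congr rfl (fun k _ => add_comm 1 (t * aseq k)), h1]
        exact Finset.sum_congr rfl fun s _ => by rw [h2 s, Finset.prod_const_one, mul_one]
    _ = ∑ j ∈ Finset.range ((Finset.range N).card + 1),
          ∑ s ∈ Finset.powersetCard j (Finset.range N), t ^ s.card * P s :=
        Finset.sum_powerset _ _
    _ = ∑ j ∈ Finset.range (N + 1), t ^ j * EN j N := by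
        rw [Finset.card_range]
        refine Finset.sum_congr rfl fun j _ => ?_
        rw [EN, Finset.mul_sum]
        refine Finset.sum_congr rfl fun s hs => ?_
        rw [(Finset.mem_powersetCard.1 hs).2]

lemma tendsto_S (t : ℝ) (ht : |t| < 1) :
    Tendsto (fun N => ∏ k ∈ Finset.range N, (1 + t * aseq k)) atTop
      (𝓝 (∑' j, t ^ j * e j)) := by
  have hbound : Summable (fun j : ℕ => eTot * |t| ^ j) :=
    (summable_geometric_of_lt_one (abs_nonneg t) ht).mul_left eTot
  have h := tendsto_tsum_of_dominated_convergence (𝓕 := atTop)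
    (f := fun N j => t ^ j * EN j N) (g := fun j => t ^ j * e j)
    (bound := fun j => eTot * |t| ^ j) hbound
    (fun j => ((EN_tendsto j).const_mul _))
    (Filter.Eventually.of_forall fun N j => by
      rw [Real.norm_eq_abs, abs_mul, abs_pow, abs_of_nonneg (EN_nonneg j N)]
      calc |t| ^ j * EN j N ≤ |t| ^ j * eTot := by
            exact mul_le_mul_of_nonneg_left ((EN_le j N).trans (e_le_eTot j))
              (pow_nonneg (abs_nonneg t) j)
        _ = eTot * |t| ^ j := mul_comm _ _)
  have heq : ∀ N : ℕ, ∑' j, t ^ j * EN j N = ∏ k ∈ Finset.range N, (1 + t * aseq k) := by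
    intro N
    rw [prod_expand]
    apply tsum_eq_sum
    intro j hj
    have : N < j := by
      rw [Finset.mem_range] at hj; omega
    have : Finset.powersetCard j (Finset.range N) = ∅ :=
      Finset.powersetCard_eq_empty.2 (by simpa using this)
    simp [EN, this]
  simpa only [funext heq] using h

lemma S_eq_sin (x : ℝ) (hx0 : x ≠ 0) (hx1 : |x| < 1) :
    ∑' j, (-x ^ 2) ^ j * e j = Real.sin (π * x) / (π * x) := by
  have ht : |(-x ^ 2)| < 1 := by
    rw [abs_neg, abs_pow]
    calc |x| ^ 2 < 1 ^ 2 := by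
          apply pow_lt_pow_left₀ hx1 (abs_nonneg x); omega
      _ = 1 := one_pow 2
  have h1 := tendsto_S (-x ^ 2) ht
  have h1' : Tendsto (fun N => π * x * ∏ k ∈ Finset.range N, (1 + (-x ^ 2) * aseq k)) atTop
      (𝓝 (π * x * ∑' j, (-x ^ 2) ^ j * e j)) := h1.const_mul _
  have h2 := Real.tendsto_euler_sin_prod x
  have heq : (fun N : ℕ => π * x * ∏ j ∈ Finset.range N, ((1 : ℝ) - x ^ 2 / ((j : ℝ) + 1) ^ 2)) =
      (fun N => π * x * ∏ k ∈ Finset.range N, (1 + (-x ^ 2) * aseq k)) := by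
    funext N
    congr 1
    exact Finset.prod_congr rfl fun k _ => by rw [aseq]; ring
  rw [heq] at h2
  have hπx : π * x ≠ 0 := mul_ne_zero Real.pi_ne_zero hx0
  have := tendsto_nhds_unique h1' h2
  field_simp
  rw [mul_comm x π]
  linarith [this]


noncomputable def cseq (m : ℕ) : ℝ := if m % 2 = 0 then (-1) ^ (m / 2) * e (m / 2) else 0

noncomputable def dseq (m : ℕ) : ℝ :=
  if m % 2 = 0 then (-1) ^ (m / 2) * π ^ m / Nat.factorial (m + 1) else 0

lemma cseq_two_mul (j : ℕ) : cseq (2 * j) = (-1) ^ j * e j := by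
  simp [cseq, Nat.mul_div_cancel_left j two_pos, Nat.mul_mod_right]

lemma dseq_two_mul (j : ℕ) : dseq (2 * j) = (-1) ^ j * π ^ (2 * j) / Nat.factorial (2 * j + 1) := by
  simp [dseq, Nat.mul_div_cancel_left j two_pos, Nat.mul_mod_right]

lemma odd_not_range (m : ℕ) (hm : m ∉ Set.range (fun j => 2 * j)) : m % 2 = 1 := by
  rcases Nat.even_or_odd m with h | h
  · obtain ⟨r, hr⟩ := h
    refine absurd ⟨r, ?_⟩ hm
    show 2 * r = m
    omega
  · exact Nat.odd_iff.mp h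

lemma summable_S (x : ℝ) (hx : |x| < 1) : Summable (fun j : ℕ => (-x ^ 2) ^ j * e j) := by
  have hx2 : x ^ 2 < 1 := by
    have := abs_nonneg x
    nlinarith [sq_abs x]
  apply Summable.of_norm
  have hb : Summable (fun j : ℕ => (x ^ 2) ^ j * eTot) :=
    (summable_geometric_of_lt_one (sq_nonneg x) hx2).mul_right eTot
  apply Summable.of_nonneg_of_le (fun j => norm_nonneg _) _ hb
  intro j
  rw [Real.norm_eq_abs, abs_mul, abs_pow, abs_neg, abs_of_nonneg (sq_nonneg x),
    abs_of_nonneg (e_nonneg j)]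
  exact mul_le_mul_of_nonneg_left (e_le_eTot j) (pow_nonneg (sq_nonneg x) j)

lemma hasSum_c (x : ℝ) (hx : |x| < 1) :
    HasSum (fun m => cseq m * x ^ m) (∑' j, (-x ^ 2) ^ j * e j) := by
  have hinj : Function.Injective (fun j : ℕ => 2 * j) := fun a b h => by simpa using h
  rw [← Function.Injective.hasSum_iff hinj (fun m hm => by
    rw [show cseq m = 0 by simp [cseq, odd_not_range m hm], zero_mul])]
  have : (fun m => cseq m * x ^ m) ∘ (fun j : ℕ => 2 * j) = fun j => (-x ^ 2) ^ j * e j := by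
    funext j
    simp only [Function.comp_apply, cseq_two_mul]
    rw [pow_mul, neg_pow (x ^ 2) j]
    ring_nf
  rw [this]
  exact (summable_S x hx).hasSum

lemma hasSum_d (x : ℝ) (hx : |x| < 1) :
    HasSum (fun m => dseq m * x ^ m) (∑' j, (-x ^ 2) ^ j * e j) := by
  rcases eq_or_ne x 0 with rfl | hx0
  · have h0 : (∑' j : ℕ, (-(0:ℝ) ^ 2) ^ j * e j) = 1 := by
      rw [tsum_eq_single 0 (fun j hj => by
        simp [zero_pow hj])]
      simp [e_zero]
    rw [h0]
    have := hasSum_single (f := fun m => dseq m * (0:ℝ) ^ m) 0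
      (fun m hm => by simp [zero_pow hm])
    simpa [dseq] using this
  · rw [S_eq_sin x hx0 hx]
    have hπx : π * x ≠ 0 := mul_ne_zero Real.pi_ne_zero hx0
    have h1 := (Real.hasSum_sin (π * x)).div_const (π * x)
    have h2 : (fun j : ℕ => (-1) ^ j * (π * x) ^ (2 * j + 1) / (Nat.factorial (2 * j + 1)) / (π * x))
        = fun j => ((-1) ^ j * π ^ (2 * j) / Nat.factorial (2 * j + 1)) * x ^ (2 * j) := by
      funext j
      rw [pow_succ, mul_pow]
      field_simp
    rw [h2] at h1
    have hinj : Function.Injective (fun j : ℕ => 2 * j) := fun a b h => by simpa using h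
    rw [← Function.Injective.hasSum_iff hinj (fun m hm => by
      rw [show dseq m = 0 by simp [dseq, odd_not_range m hm], zero_mul])]
    have : (fun m => dseq m * x ^ m) ∘ (fun j : ℕ => 2 * j) =
        fun j => ((-1) ^ j * π ^ (2 * j) / Nat.factorial (2 * j + 1)) * x ^ (2 * j) := by
      funext j
      simp only [Function.comp_apply, dseq_two_mul]
    rw [this]
    exact h1


open FormalMultilinearSeries in
lemma radius_c : ((2⁻¹ : ℝ≥0) : ℝ≥0∞) ≤ (ofScalars ℝ cseq).radius := by
  apply le_radius_of_summable_norm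
  have hb : Summable (fun m : ℕ => eTot * ((2⁻¹ : ℝ≥0) : ℝ) ^ m) := by
    apply Summable.mul_left
    apply summable_geometric_of_lt_one <;> norm_num
  apply Summable.of_nonneg_of_le _ _ hb
  · intro m; positivity
  · intro m
    rw [ofScalars_norm, Real.norm_eq_abs]
    apply mul_le_mul_of_nonneg_right _ (by positivity)
    rcases Nat.even_or_odd m with h | h
    · have hm : m % 2 = 0 := Nat.even_iff.mp h
      rw [cseq, if_pos hm, abs_mul, abs_pow, abs_neg, abs_one, one_pow, one_mul,
        abs_of_nonneg (e_nonneg _)]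
      exact e_le_eTot _
    · rw [cseq, if_neg (by rw [Nat.odd_iff] at h; omega : ¬ m % 2 = 0), abs_zero]
      exact eTot_nonneg

lemma summable_dseq_abs : Summable (fun m => |dseq m|) := by
  rw [summable_abs_iff]
  have hinj : Function.Injective (fun j : ℕ => 2 * j) := fun a b h => by simpa using h
  rw [← Function.Injective.summable_iff hinj (fun m hm => by
    simp [dseq, odd_not_range m hm])]
  have h1 : Summable (fun j : ℕ =>
      (-1) ^ j * π ^ (2 * j + 1) / (Nat.factorial (2 * j + 1)) / π) :=
    (Real.hasSum_sin π).summable.div_const π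
  apply h1.congr
  intro j
  simp only [Function.comp_apply, dseq_two_mul]
  rw [pow_succ]
  field_simp

open FormalMultilinearSeries in
lemma radius_d : ((2⁻¹ : ℝ≥0) : ℝ≥0∞) ≤ (ofScalars ℝ dseq).radius := by
  apply le_radius_of_summable_norm
  apply Summable.of_nonneg_of_le _ _ summable_dseq_abs
  · intro m; positivity
  · intro m
    rw [ofScalars_norm, Real.norm_eq_abs]
    calc |dseq m| * ((2⁻¹ : ℝ≥0) : ℝ) ^ m ≤ |dseq m| * 1 := by
          apply mul_le_mul_of_nonneg_left _ (abs_nonneg _)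
          apply pow_le_one₀ <;> norm_num
      _ = |dseq m| := mul_one _


noncomputable def S' : ℝ → ℝ := fun x => ∑' j, (-x ^ 2) ^ j * e j

open FormalMultilinearSeries in
lemma hasF (p : FormalMultilinearSeries ℝ ℝ ℝ) (q : ℕ → ℝ) (hpq : p = ofScalars ℝ q)
    (hrad : ((2⁻¹ : ℝ≥0) : ℝ≥0∞) ≤ p.radius)
    (hq : ∀ x : ℝ, |x| < 1 → HasSum (fun m => q m * x ^ m) (∑' j, (-x ^ 2) ^ j * e j)) :
    HasFPowerSeriesAt S' p 0 := by
  refine ⟨((2⁻¹ : ℝ≥0) : ℝ≥0∞), ⟨hrad, by norm_num, ?_⟩⟩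
  intro y hy
  have hy' : |y| < 1 := by
    rw [mem_emetric_ball_zero_iff, enorm_eq_nnnorm, ENNReal.coe_lt_coe] at hy
    have := NNReal.coe_lt_coe.2 hy
    rw [coe_nnnorm, Real.norm_eq_abs] at this
    calc |y| < ((2⁻¹ : ℝ≥0) : ℝ) := this
      _ < 1 := by norm_num
  have := hq y hy'
  rw [hpq]
  simp only [ofScalars_apply_eq, smul_eq_mul, zero_add]
  exact this

lemma c_eq_d : cseq = dseq := by
  have h1 : HasFPowerSeriesAt S' (FormalMultilinearSeries.ofScalars ℝ cseq) 0 :=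
    hasF _ _ rfl radius_c hasSum_c
  have h2 : HasFPowerSeriesAt S' (FormalMultilinearSeries.ofScalars ℝ dseq) 0 :=
    hasF _ _ rfl radius_d hasSum_d
  exact (FormalMultilinearSeries.ofScalars_series_eq_iff ℝ cseq dseq).1
    (h1.eq_formalMultilinearSeries h2)

lemma e_eq (n : ℕ) : e n = π ^ (2 * n) / (Nat.factorial (2 * n + 1)) := by
  have h := congrFun c_eq_d (2 * n)
  rw [cseq_two_mul, dseq_two_mul, mul_div_assoc] at h
  exact mul_left_cancel₀ (by positivity : ((-1 : ℝ)) ^ n ≠ 0) h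


variable {n : ℕ}

lemma tuple_sub_inj (t : {f : Fin n → ℕ // StrictAnti f ∧ ∀ i, 1 ≤ f i}) :
    Function.Injective (fun i => t.1 i - 1) := by
  intro i j h
  simp only at h
  have h1 := t.2.2 i
  have h2 := t.2.2 j
  exact t.2.1.injective (by omega)

lemma key (n : ℕ) :
    e n = ∑' f : {f : Fin n → ℕ // StrictAnti f ∧ ∀ i, 1 ≤ f i},
      ∏ i : Fin n, (1 : ℝ) / ((f.1 i : ℝ) ^ 2) := by
  classical
  set g : {f : Fin n → ℕ // StrictAnti f ∧ ∀ i, 1 ≤ f i} → ℝ :=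
    fun f => ∏ i : Fin n, (1 : ℝ) / ((f.1 i : ℝ) ^ 2) with hg
  have hgpos : ∀ t, 0 < g t := by
    intro t
    apply Finset.prod_pos
    intro i _
    have := t.2.2 i
    have : (1 : ℝ) ≤ (t.1 i : ℝ) := by exact_mod_cast this
    positivity
  set ii : Function.support g → {s : Finset ℕ // s.card = n} :=
    fun t => ⟨Finset.image (fun i => t.1.1 i - 1) Finset.univ, by
      rw [Finset.card_image_of_injective _ (tuple_sub_inj t.1), Finset.card_univ,
        Fintype.card_fin]⟩ with hii
  -- strictly monotone enumeration of a tuple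
  have hF : ∀ t : {f : Fin n → ℕ // StrictAnti f ∧ ∀ i, 1 ≤ f i},
      StrictMono (fun i : Fin n => t.1 i.rev - 1) := by
    intro t i j hij
    have hrev : j.rev < i.rev := by
      rw [Fin.rev_lt_rev]
      exact hij
    have := t.2.1 hrev
    have h1 := t.2.2 i.rev
    show t.1 i.rev - 1 < t.1 j.rev - 1
    omega
  have hmemF : ∀ (t : {f : Fin n → ℕ // StrictAnti f ∧ ∀ i, 1 ≤ f i}) (i : Fin n),
      t.1 i.rev - 1 ∈ Finset.image (fun i => t.1 i - 1) Finset.univ := by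
    intro t i
    exact Finset.mem_image.2 ⟨i.rev, Finset.mem_univ _, rfl⟩
  have hinj : Function.Injective ii := by
    intro t1 t2 h
    have hs : Finset.image (fun i => t1.1.1 i - 1) Finset.univ
        = Finset.image (fun i => t2.1.1 i - 1) Finset.univ := congrArg Subtype.val h
    have hc : (Finset.image (fun i => t1.1.1 i - 1) Finset.univ).card = n := (ii t1).2
    have e1 := Finset.orderEmbOfFin_unique hc (fun i => hmemF t1.1 i) (hF t1.1)
    have e2 := Finset.orderEmbOfFin_unique hc
      (fun i => hs ▸ hmemF t2.1 i) (hF t2.1)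
    have e3 : (fun i : Fin n => t1.1.1 i.rev - 1) = fun i : Fin n => t2.1.1 i.rev - 1 :=
      e1.trans e2.symm
    apply Subtype.ext
    apply Subtype.ext
    funext i
    have := congrFun e3 i.rev
    simp only [Fin.rev_rev] at this
    have h1 := t1.1.2.2 i
    have h2 := t2.1.2.2 i
    omega
  have hsurj : Function.support (fun s : {s : Finset ℕ // s.card = n} => P s.1)
      ⊆ Set.range ii := by
    rintro ⟨s, hs⟩ -
    set t : Fin n → ℕ := fun i => s.orderEmbOfFin hs i.rev + 1 with ht
    have htanti : StrictAnti t := by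
      intro i j hij
      have hrev : j.rev < i.rev := by rw [Fin.rev_lt_rev]; exact hij
      have := (s.orderEmbOfFin hs).strictMono hrev
      show s.orderEmbOfFin hs j.rev + 1 < s.orderEmbOfFin hs i.rev + 1
      omega
    have htone : ∀ i, 1 ≤ t i := fun i => Nat.le_add_left _ _
    have htmem : (⟨t, htanti, htone⟩ : {f : Fin n → ℕ // StrictAnti f ∧ ∀ i, 1 ≤ f i})
        ∈ Function.support g := by
      exact (hgpos _).ne'
    refine ⟨⟨⟨t, htanti, htone⟩, htmem⟩, ?_⟩
    apply Subtype.ext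
    show Finset.image (fun i => t i - 1) Finset.univ = s
    ext k
    simp only [Finset.mem_image, Finset.mem_univ, true_and, ht]
    constructor
    · rintro ⟨i, rfl⟩
      simpa using s.orderEmbOfFin_mem hs i.rev
    · intro hk
      have : k ∈ Set.range (s.orderEmbOfFin hs) := by
        rw [Finset.range_orderEmbOfFin]
        exact hk
      obtain ⟨i, hi⟩ := this
      exact ⟨i.rev, by simp [hi]⟩
  have hfg : ∀ t : Function.support g, P (ii t).1 = g t.1 := by
    rintro ⟨t, -⟩
    show P (Finset.image (fun i => t.1 i - 1) Finset.univ) = _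
    rw [P, Finset.prod_image (fun i _ j _ h => tuple_sub_inj t h)]
    simp only [hg]
    apply Finset.prod_congr rfl
    intro i _
    have h1 := t.2.2 i
    rw [aseq]
    congr 2
    have : (t.1 i - 1) + 1 = t.1 i := by omega
    exact_mod_cast congrArg (Nat.cast (R := ℝ)) this
  exact tsum_eq_tsum_of_ne_zero_bij ii hinj hsurj hfg

end ZetaTwoAux

/-- ζ({2}ⁿ) = π^{2n} / (2n+1)! for every n ≥ 1. -/
theorem zeta_two_repeated (n : ℕ) (hn : 1 ≤ n) :
    (∑' f : {f : Fin n → ℕ // StrictAnti f ∧ ∀ i, 1 ≤ f i},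
        ∏ i : Fin n, (1 : ℝ) / ((f.1 i : ℝ) ^ 2))
      = π ^ (2 * n) / (Nat.factorial (2 * n + 1)) := by
  rw [← ZetaTwoAux.key n, ZetaTwoAux.e_eq n]
end

section
/- For every integer n ≥ 2, the harmonic sum ∑_{k≥1} H_k²/(k+1)^n equals ζ(n,2) + 2ζ(n,1,1), where ζ(n,2) = ∑_{m>p≥1} 1/(m^n p²) and ζ(n,1,1) = ∑_{m>p>q≥1} 1/(m^n p q). -/
private lemma sq_sum_expand (x : ℕ → ℝ) (m : ℕ) :
    (∑ j ∈ Finset.Icc 1 m, x j) ^ 2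
      = ∑ p ∈ Finset.Icc 1 m, (x p) ^ 2
        + 2 * ∑ p ∈ Finset.Icc 1 m, ∑ q ∈ Finset.Ico 1 p, x p * x q := by
  induction m with
  | zero => simp
  | succ m ih =>
      rw [Finset.sum_Icc_succ_top (Nat.le_add_left 1 m),
        Finset.sum_Icc_succ_top (Nat.le_add_left 1 m),
        Finset.sum_Icc_succ_top (Nat.le_add_left 1 m),
        Finset.Ico_add_one_right_eq_Icc, ← Finset.mul_sum]
      linear_combination ih

private lemma harm_le (m : ℕ) :
    ∑ j ∈ Finset.Icc 1 m, (1 : ℝ) / j ≤ 5 * (m : ℝ) ^ ((1 : ℝ)/4) := by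
  rcases Nat.eq_zero_or_pos m with rfl | hm
  · norm_num
  have hm1 : (1 : ℝ) ≤ (m : ℝ) := by exact_mod_cast hm
  have h1 : ∑ j ∈ Finset.Icc 1 m, (1 : ℝ) / j = ((harmonic m : ℚ) : ℝ) := by
    rw [harmonic_eq_sum_Icc]; push_cast; simp [one_div]
  have h2 : ((harmonic m : ℚ) : ℝ) ≤ 1 + Real.log m := harmonic_le_one_add_log m
  have hr : (1 : ℝ) ≤ (m : ℝ) ^ ((1 : ℝ)/4) := Real.one_le_rpow hm1 (by norm_num)
  have h3 : Real.log ((m : ℝ) ^ ((1 : ℝ)/4)) = (1/4) * Real.log m :=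
    Real.log_rpow (by linarith) _
  have h4 := Real.log_le_sub_one_of_pos (x := (m : ℝ) ^ ((1 : ℝ)/4)) (by linarith)
  rw [h3] at h4
  rw [h1]
  linarith

noncomputable def Af (n m : ℕ) : ℝ := ∑ p ∈ Finset.Ico 1 m, (1 : ℝ) / ((m : ℝ)^n * (p : ℝ)^2)

noncomputable def Bf (n m : ℕ) : ℝ :=
  ∑ p ∈ Finset.Ico 1 m, ∑ q ∈ Finset.Ico 1 p, (1 : ℝ) / ((m : ℝ)^n * (p : ℝ) * (q : ℝ))

private lemma Hsq_div_le (n m : ℕ) (hn : 2 ≤ n) :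
    (∑ p ∈ Finset.Ico 1 m, (1 : ℝ) / p) ^ 2 / (m : ℝ)^n
      ≤ 25 * (m : ℝ) ^ (-(3/2) : ℝ) := by
  rcases Nat.eq_zero_or_pos m with rfl | hm
  · simp [Real.zero_rpow, (by norm_num : (-(3/2) : ℝ) ≠ 0)]
  have hm1 : (1 : ℝ) ≤ (m : ℝ) := by exact_mod_cast hm
  have hm0 : (0 : ℝ) < (m : ℝ) := by linarith
  have hH0 : (0 : ℝ) ≤ ∑ p ∈ Finset.Ico 1 m, (1 : ℝ) / p := by positivity
  have hH : ∑ p ∈ Finset.Ico 1 m, (1 : ℝ) / p ≤ 5 * (m : ℝ) ^ ((1 : ℝ)/4) := by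
    refine le_trans (Finset.sum_le_sum_of_subset_of_nonneg ?_ ?_) (harm_le m)
    · intro x hx; simp only [Finset.mem_Ico, Finset.mem_Icc] at *; omega
    · intro i _ _; positivity
  have hsq : (∑ p ∈ Finset.Ico 1 m, (1 : ℝ) / p) ^ 2 ≤ 25 * (m : ℝ) ^ ((1 : ℝ)/2) := by
    have h := mul_self_le_mul_self hH0 hH
    have : (5 * (m : ℝ) ^ ((1 : ℝ)/4)) * (5 * (m : ℝ) ^ ((1 : ℝ)/4))
        = 25 * (m : ℝ) ^ ((1 : ℝ)/2) := by
      rw [show (5 * (m : ℝ) ^ ((1 : ℝ)/4)) * (5 * (m : ℝ) ^ ((1 : ℝ)/4))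
          = 25 * ((m : ℝ) ^ ((1 : ℝ)/4) * (m : ℝ) ^ ((1 : ℝ)/4)) by ring,
        ← Real.rpow_add hm0]
      norm_num
    rw [sq, ← this]; exact h
  have hpow : (m : ℝ)^2 ≤ (m : ℝ)^n := pow_le_pow_right₀ hm1 hn
  have h2pos : (0 : ℝ) < (m : ℝ)^2 := by positivity
  calc (∑ p ∈ Finset.Ico 1 m, (1 : ℝ) / p) ^ 2 / (m : ℝ)^n
      ≤ 25 * (m : ℝ) ^ ((1 : ℝ)/2) / (m : ℝ)^2 :=
        div_le_div₀ (by positivity) hsq h2pos hpow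
    _ = 25 * (m : ℝ) ^ (-(3/2) : ℝ) := by
        rw [mul_div_assoc, show ((m : ℝ)^2 : ℝ) = (m : ℝ) ^ ((2 : ℕ) : ℝ) from
          (Real.rpow_natCast _ 2).symm, ← Real.rpow_sub hm0]
        norm_num

private lemma Af_nonneg (n m : ℕ) : 0 ≤ Af n m := by unfold Af; positivity

private lemma Bf_nonneg (n m : ℕ) : 0 ≤ Bf n m := by unfold Bf; positivity

private lemma Af_le (n m : ℕ) (hn : 2 ≤ n) : Af n m ≤ 25 * (m : ℝ) ^ (-(3/2) : ℝ) := by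
  rcases Nat.eq_zero_or_pos m with rfl | hm
  · simp [Af, Real.zero_rpow, (by norm_num : (-(3/2) : ℝ) ≠ 0)]
  have hm0 : (0 : ℝ) < (m : ℝ)^n := by positivity
  refine le_trans ?_ (Hsq_div_le n m hn)
  have h1 : Af n m = (∑ p ∈ Finset.Ico 1 m, ((1 : ℝ)/p)^2) / (m : ℝ)^n := by
    rw [Finset.sum_div]
    refine Finset.sum_congr rfl fun p _ => ?_
    rw [div_pow, one_pow, div_div, mul_comm]
  rw [h1, div_le_div_iff₀ hm0 hm0]
  have := Finset.sum_sq_le_sq_sum_of_nonneg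
    (s := Finset.Ico 1 m) (f := fun p : ℕ => (1 : ℝ)/(p:ℝ)) (fun i _ => by positivity)
  nlinarith [this, hm0.le]

private lemma Bf_le (n m : ℕ) (hn : 2 ≤ n) : Bf n m ≤ 25 * (m : ℝ) ^ (-(3/2) : ℝ) := by
  rcases Nat.eq_zero_or_pos m with rfl | hm
  · simp [Bf, Real.zero_rpow, (by norm_num : (-(3/2) : ℝ) ≠ 0)]
  have hm0 : (0 : ℝ) < (m : ℝ)^n := by positivity
  refine le_trans ?_ (Hsq_div_le n m hn)
  have h1 : (∑ p ∈ Finset.Ico 1 m, (1 : ℝ)/p)^2 / (m : ℝ)^n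
      = ∑ p ∈ Finset.Ico 1 m, ∑ q ∈ Finset.Ico 1 m, (1 : ℝ) / ((m : ℝ)^n * p * q) := by
    rw [sq, Finset.sum_mul_sum, Finset.sum_div]
    refine Finset.sum_congr rfl fun p _ => ?_
    rw [Finset.sum_div]
    refine Finset.sum_congr rfl fun q _ => ?_
    rw [div_mul_div_comm, one_mul, div_div]
    congr 1; ring
  rw [h1]
  refine Finset.sum_le_sum fun p hp => ?_
  refine Finset.sum_le_sum_of_subset_of_nonneg ?_ fun i _ _ => by positivity
  simp only [Finset.mem_Ico] at hp
  exact Finset.Ico_subset_Ico le_rfl (le_of_lt hp.2)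

/-- For n ≥ 2, ∑_{k≥1} H_k²/(k+1)ⁿ = ζ(n,2) + 2 ζ(n,1,1). -/
theorem harmonic_sum_sq_eq_mzv (n : ℕ) (hn : 2 ≤ n) :
    (∑' k : ℕ, (∑ j ∈ Finset.Icc 1 (k + 1), (1 : ℝ) / j) ^ 2 / ((k : ℝ) + 2) ^ n)
      = (∑' p : ℕ × ℕ, if 1 ≤ p.2 ∧ p.2 < p.1 then
            (1 : ℝ) / ((p.1 : ℝ) ^ n * (p.2 : ℝ) ^ 2) else 0)
        + 2 * (∑' t : ℕ × ℕ × ℕ, if 1 ≤ t.2.2 ∧ t.2.2 < t.2.1 ∧ t.2.1 < t.1 then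
            (1 : ℝ) / ((t.1 : ℝ) ^ n * (t.2.1 : ℝ) * (t.2.2 : ℝ)) else 0) := by
  classical
  have hsum25 : Summable (fun m : ℕ => 25 * (m : ℝ) ^ (-(3/2) : ℝ)) :=
    (Real.summable_nat_rpow.mpr (by norm_num)).mul_left 25
  have hAsum : Summable (Af n) :=
    Summable.of_nonneg_of_le (Af_nonneg n) (fun m => Af_le n m hn) hsum25
  have hBsum : Summable (Bf n) :=
    Summable.of_nonneg_of_le (Bf_nonneg n) (fun m => Bf_le n m hn) hsum25
  -- the double sum
  set F : ℕ × ℕ → ℝ := fun p => if 1 ≤ p.2 ∧ p.2 < p.1 then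
      (1 : ℝ) / ((p.1 : ℝ) ^ n * (p.2 : ℝ) ^ 2) else 0 with hFdef
  have hFnn : 0 ≤ F := by
    intro p; simp only [hFdef]; split <;> positivity
  have hFfin : ∀ m : ℕ, ∀ p ∉ Finset.Ico 1 m, F (m, p) = 0 := by
    intro m p hp
    have : ¬(1 ≤ p ∧ p < m) := by simpa [Finset.mem_Ico] using hp
    simp [hFdef, this]
  have hFrow : ∀ m : ℕ, Summable fun p => F (m, p) :=
    fun m => summable_of_ne_finset_zero (hFfin m)
  have hFrowsum : ∀ m : ℕ, (∑' p : ℕ, F (m, p)) = Af n m := by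
    intro m
    rw [tsum_eq_sum (hFfin m)]
    refine Finset.sum_congr rfl fun p hp => ?_
    simp only [Finset.mem_Ico] at hp
    simp [hFdef, hp.1, hp.2, Af]
  have hFsum : Summable F :=
    (summable_prod_of_nonneg hFnn).mpr
      ⟨hFrow, hAsum.congr fun m => (hFrowsum m).symm⟩
  have hFtsum : (∑' p : ℕ × ℕ, F p) = ∑' m : ℕ, Af n m := by
    rw [Summable.tsum_prod' hFsum hFrow]; exact tsum_congr hFrowsum
  -- the triple sum
  set G : ℕ × ℕ × ℕ → ℝ := fun t => if 1 ≤ t.2.2 ∧ t.2.2 < t.2.1 ∧ t.2.1 < t.1 then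
      (1 : ℝ) / ((t.1 : ℝ) ^ n * (t.2.1 : ℝ) * (t.2.2 : ℝ)) else 0 with hGdef
  have hGnn : 0 ≤ G := by
    intro t; simp only [hGdef]; split <;> positivity
  have hGfin : ∀ m : ℕ, ∀ y ∉ Finset.Ico 1 m ×ˢ Finset.Ico 1 m, G (m, y) = 0 := by
    intro m y hy
    have : ¬(1 ≤ y.2 ∧ y.2 < y.1 ∧ y.1 < m) := by
      simp only [Finset.mem_product, Finset.mem_Ico] at hy; omega
    simp [hGdef, this]
  have hGrow : ∀ m : ℕ, Summable fun y : ℕ × ℕ => G (m, y) :=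
    fun m => summable_of_ne_finset_zero (hGfin m)
  have hGrowsum : ∀ m : ℕ, (∑' y : ℕ × ℕ, G (m, y)) = Bf n m := by
    intro m
    rw [tsum_eq_sum (hGfin m), Finset.sum_product]
    unfold Bf
    refine Finset.sum_congr rfl fun p hp => ?_
    simp only [Finset.mem_Ico] at hp
    have hfil : Finset.filter (fun q => 1 ≤ q ∧ q < p ∧ p < m) (Finset.Ico 1 m)
        = Finset.Ico 1 p := by
      ext q; simp only [Finset.mem_filter, Finset.mem_Ico]; omega
    calc ∑ q ∈ Finset.Ico 1 m, G (m, p, q)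
        = ∑ q ∈ Finset.filter (fun q => 1 ≤ q ∧ q < p ∧ p < m) (Finset.Ico 1 m),
            (1 : ℝ) / ((m : ℝ) ^ n * (p : ℝ) * (q : ℝ)) := by
          rw [Finset.sum_filter]
      _ = ∑ q ∈ Finset.Ico 1 p, (1 : ℝ) / ((m : ℝ) ^ n * (p : ℝ) * (q : ℝ)) := by
          rw [hfil]
  have hGsum : Summable G :=
    (summable_prod_of_nonneg hGnn).mpr
      ⟨hGrow, hBsum.congr fun m => (hGrowsum m).symm⟩
  have hGtsum : (∑' t : ℕ × ℕ × ℕ, G t) = ∑' m : ℕ, Bf n m := by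
    rw [Summable.tsum_prod' hGsum hGrow]; exact tsum_congr hGrowsum
  -- index shift
  have hA0 : Af n 0 = 0 := by simp [Af]
  have hA1 : Af n 1 = 0 := by simp [Af]
  have hB0 : Bf n 0 = 0 := by simp [Bf]
  have hB1 : Bf n 1 = 0 := by simp [Bf]
  have hAshift : ∑' m : ℕ, Af n m = ∑' k : ℕ, Af n (k + 2) := by
    rw [Summable.tsum_eq_zero_add hAsum, Summable.tsum_eq_zero_add ((summable_nat_add_iff 1).mpr hAsum),
      hA0, hA1, zero_add, zero_add]
  have hBshift : ∑' m : ℕ, Bf n m = ∑' k : ℕ, Bf n (k + 2) := by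
    rw [Summable.tsum_eq_zero_add hBsum, Summable.tsum_eq_zero_add ((summable_nat_add_iff 1).mpr hBsum),
      hB0, hB1, zero_add, zero_add]
  -- termwise identity
  have hterm : ∀ k : ℕ,
      (∑ j ∈ Finset.Icc 1 (k + 1), (1 : ℝ) / j) ^ 2 / ((k : ℝ) + 2) ^ n
        = Af n (k + 2) + 2 * Bf n (k + 2) := by
    intro k
    have hMcast : ((k : ℝ) + 2) = ((k + 2 : ℕ) : ℝ) := by push_cast; ring
    have hIcc : Finset.Ico 1 (k + 2) = Finset.Icc 1 (k + 1) := by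
      ext x; simp only [Finset.mem_Icc, Finset.mem_Ico]; omega
    rw [hMcast, sq_sum_expand (fun j => (1 : ℝ)/j) (k + 1), add_div]
    congr 1
    · rw [Af, hIcc, Finset.sum_div]
      refine Finset.sum_congr rfl fun p _ => ?_
      rw [div_pow, one_pow, div_div, mul_comm]
    · rw [mul_div_assoc]
      congr 1
      rw [Bf, hIcc, Finset.sum_div]
      refine Finset.sum_congr rfl fun p _ => ?_
      rw [Finset.sum_div]
      refine Finset.sum_congr rfl fun q _ => ?_
      rw [div_mul_div_comm, one_mul, div_div]
      congr 1; ring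
  -- assemble
  have hA2 : Summable fun k : ℕ => Af n (k + 2) := (summable_nat_add_iff 2).mpr hAsum
  have hB2 : Summable fun k : ℕ => Bf n (k + 2) := (summable_nat_add_iff 2).mpr hBsum
  calc (∑' k : ℕ, (∑ j ∈ Finset.Icc 1 (k + 1), (1 : ℝ) / j) ^ 2 / ((k : ℝ) + 2) ^ n)
      = ∑' k : ℕ, (Af n (k + 2) + 2 * Bf n (k + 2)) := tsum_congr hterm
    _ = (∑' k : ℕ, Af n (k + 2)) + ∑' k : ℕ, 2 * Bf n (k + 2) :=
        Summable.tsum_add hA2 (hB2.mul_left 2)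
    _ = (∑' k : ℕ, Af n (k + 2)) + 2 * ∑' k : ℕ, Bf n (k + 2) := by rw [tsum_mul_left]
    _ = (∑' p : ℕ × ℕ, F p) + 2 * (∑' t : ℕ × ℕ × ℕ, G t) := by
        rw [hFtsum, hGtsum, hAshift, hBshift]
end
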